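/- arXiv:math/0401304 — 6 statements merged into one kernel-verified Lean document; each statement's English description precedes it below -/
import Mathlib

section
/- Every permutation f of an infinite set Ω can be written as a commutator: there exist g, h ∈ Sym(Ω) with f = g⁻¹h⁻¹gh. -/
/-!
If `a` is conjugate to `a * f`, say `c * a * c⁻¹ = a * f`, then `f = a⁻¹ * c * a * c⁻¹` is a
commutator. Permutations all of whose orbits are infinite ("free" permutations) are shifts on
`orbits × ℤ`, hence conjugate as soon as they have equally many orbits.

If `f` has infinitely many orbits, the set of orbits splits into `ℤ`-many pieces of full
cardinality, giving an `f`-invariant level function `ℓ : Ω → ℤ` with equinumerous fibres. A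
permutation `S` raising `ℓ` by one exists, and `S` and `S * f` both raise `ℓ` by one, so both are
free with the fibre `ℓ = 0` as a set of orbit representatives.

If `f` has finitely many orbits, then `Ω` is countable and `f` is the shift on an infinite orbit
`ℤ`, preserving its complement `R`. The dyadic map `n ↦ n + 2 ^ (v₂ n + 1)`, with the points of `R`
inserted into its chains, gives a permutation `W` of `ℤ ⊕ R` such that `W` and `W * f` both
increase a height function and both have infinitely many orbits crossing height `0`; so both are
free with countably infinitely many orbits.
-/

open Function Equiv Equiv.Perm

namespace Ore

lemma exists_eq_commutator_of_isConj_mul {G : Type*} [Group G] {a f : G}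
    (hconj : IsConj a (a * f)) : ∃ g h : G, f = g⁻¹ * h⁻¹ * g * h := by
  obtain ⟨c, hc⟩ := isConj_iff.1 hconj
  exact ⟨a, c⁻¹, by rw [inv_inv, mul_assoc _ c, mul_assoc _ (c * a), hc]; group⟩

lemma padicValInt_two_pow_mul_odd (k : ℕ) {c : ℤ} (hc : Odd c) :
    padicValInt 2 (2 ^ k * c) = k := by
  have hc0 : c ≠ 0 := by rintro rfl; simp at hc
  have hc2 : padicValInt 2 c = 0 :=
    padicValInt.eq_zero_of_not_dvd fun h => by rw [Int.odd_iff] at hc; omega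
  rw [padicValInt.mul (by positivity) hc0, hc2, show (2 : ℤ) ^ k = ((2 ^ k : ℕ) : ℤ) by simp,
    padicValInt.of_nat, padicValNat.prime_pow, add_zero]

lemma exists_eq_two_pow_mul_odd {n : ℤ} (hn : n ≠ 0) :
    ∃ (k : ℕ) (c : ℤ), Odd c ∧ n = 2 ^ k * c := by
  obtain ⟨k, m, hm, h⟩ := Nat.exists_eq_two_pow_mul_odd (Int.natAbs_ne_zero.2 hn)
  have hm' : Odd (m : ℤ) := by exact_mod_cast hm
  rcases Int.natAbs_eq n with hn' | hn'
  · exact ⟨k, m, hm', by rw [hn', h]; push_cast; ring⟩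
  · exact ⟨k, -m, hm'.neg, by rw [hn', h]; push_cast; ring⟩

/-- Its orbits are the sets `2 ^ k * (odd)` for `k ≥ 1`, and the odd numbers together with `0`:
infinitely many, each unbounded in both directions. -/
def dyadicStep (n : ℤ) : ℤ :=
  if n = 0 then 1 else if n = -1 then 0 else n + 2 ^ (padicValInt 2 n + 1)

lemma dyadicStep_two_pow_mul_odd (k : ℕ) {c : ℤ} (hc : Odd c) (h : 2 ^ k * c ≠ -1) :
    dyadicStep (2 ^ k * c) = 2 ^ k * (c + 2) := by
  have hc0 : 2 ^ k * c ≠ 0 := mul_ne_zero (by positivity) (by rintro rfl; simp at hc)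
  rw [dyadicStep, if_neg hc0, if_neg h, padicValInt_two_pow_mul_odd k hc]
  ring

lemma lt_dyadicStep (n : ℤ) : n < dyadicStep n := by
  unfold dyadicStep
  split_ifs
  · omega
  · omega
  · have : (0 : ℤ) < 2 ^ (padicValInt 2 n + 1) := by positivity
    omega

lemma dyadicStep_neg_two_pow (k : ℕ) : dyadicStep (-2 ^ (k + 1)) = 2 ^ (k + 1) := by
  have h := dyadicStep_two_pow_mul_odd (k + 1) (c := -1) (by decide) (by rw [pow_succ]; omega)
  simpa using h

/-- Hence `dyadicStep` is a bijection, with inverse `n ↦ -dyadicStep (-n)`. -/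
lemma dyadicStep_neg_involutive : Involutive fun n => dyadicStep (-n) := by
  intro n
  by_cases h0 : n = 0
  · simp [h0, dyadicStep]
  by_cases h1 : n = 1
  · simp [h1, dyadicStep]
  obtain ⟨k, c, hc, hn⟩ := exists_eq_two_pow_mul_odd (neg_ne_zero.2 h0)
  have hc' : Odd (-(c + 2)) := (hc.add_even even_two).neg
  have hne : 2 ^ k * -(c + 2) ≠ -1 := by
    intro h
    rcases k with _ | k
    · omega
    · have : (2 : ℤ) ^ (k + 1) * -(c + 2) = 2 * (2 ^ k * -(c + 2)) := by ring
      omega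
  simp only
  rw [hn, dyadicStep_two_pow_mul_odd k hc (by omega), ← mul_neg,
    dyadicStep_two_pow_mul_odd k hc' hne]
  linarith

noncomputable def dyadicPerm : Perm ℤ :=
  (Equiv.neg ℤ).trans (dyadicStep_neg_involutive.toPerm _)

lemma dyadicPerm_apply (n : ℤ) : dyadicPerm n = dyadicStep n := by
  simp [dyadicPerm]

section Orbits

variable {α : Type*}

abbrev Orbits (σ : Perm α) := Quotient (SameCycle.setoid σ)

def IsFree (σ : Perm α) : Prop := ∀ x : α, Injective fun n : ℤ => (σ ^ n) x

noncomputable def orbitParam (σ : Perm α) (p : Orbits σ × ℤ) : α := (σ ^ p.2) p.1.out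

lemma orbitParam_surjective (σ : Perm α) : Surjective (orbitParam σ) := fun x =>
  let ⟨n, hn⟩ := Quotient.mk_out (s := SameCycle.setoid σ) x
  ⟨(Quotient.mk _ x, n), hn⟩

lemma orbitParam_injective {σ : Perm α} (hσ : IsFree σ) : Injective (orbitParam σ) := by
  rintro ⟨q, m⟩ ⟨q', n⟩ h
  have hq : q = q' := by
    rw [← q.out_eq, ← q'.out_eq]
    refine Quotient.sound ⟨-n + m, ?_⟩
    simp only [orbitParam] at h
    rw [zpow_add, mul_apply, h, ← mul_apply, ← zpow_add, neg_add_cancel, zpow_zero, one_apply]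
  subst hq
  exact Prod.ext rfl (hσ _ h)

lemma apply_orbitParam (σ : Perm α) (q : Orbits σ) (n : ℤ) :
    σ (orbitParam σ (q, n)) = orbitParam σ (q, n + 1) := by
  rw [orbitParam, orbitParam, add_comm, zpow_add, zpow_one, mul_apply]

/-- `orbitParam` identifies a free `σ` with the shift on `Orbits σ × ℤ`. -/
theorem isConj_of_isFree {σ τ : Perm α} (hσ : IsFree σ) (hτ : IsFree τ)
    (e : Orbits σ ≃ Orbits τ) : IsConj σ τ := by
  let Mσ := Equiv.ofBijective _ ⟨orbitParam_injective hσ, orbitParam_surjective σ⟩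
  let Mτ := Equiv.ofBijective _ ⟨orbitParam_injective hτ, orbitParam_surjective τ⟩
  let c : Perm α := Mσ.symm.trans ((e.prodCongr (Equiv.refl ℤ)).trans Mτ)
  have hc : ∀ q n, c (orbitParam σ (q, n)) = orbitParam τ (e q, n) := fun q n => by
    simp only [c, Equiv.trans_apply]
    rw [show orbitParam σ (q, n) = Mσ (q, n) from rfl, Equiv.symm_apply_apply]
    rfl
  refine isConj_iff.2 ⟨c, mul_inv_eq_of_eq_mul (Equiv.ext fun x => ?_)⟩
  obtain ⟨⟨q, n⟩, rfl⟩ := orbitParam_surjective σ x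
  simp only [mul_apply]
  rw [apply_orbitParam, hc, hc, apply_orbitParam]

end Orbits

section Height

variable {α : Type*} {σ : Perm α} {H : α → ℤ}

lemma strictMono_height_zpow_apply (hH : ∀ x, H x < H (σ x)) (x : α) :
    StrictMono fun n : ℤ => H ((σ ^ n) x) :=
  strictMono_int_of_lt_succ fun n => by
    simpa only [add_comm n, zpow_add, zpow_one, mul_apply] using hH _

lemma isFree_of_lt_height (hH : ∀ x, H x < H (σ x)) : IsFree σ := fun x =>
  (strictMono_height_zpow_apply hH x).injective.of_comp

/-- Each orbit of a height-increasing permutation crosses from negative to nonnegative height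
exactly once. -/
lemma infinite_orbits_of_crossings (hH : ∀ x, H x < H (σ x)) {y : ℕ → α} (hy : Injective y)
    (hpos : ∀ k, 0 ≤ H (y k)) (hneg : ∀ k, H (σ⁻¹ (y k)) < 0) : Infinite (Orbits σ) := by
  refine Infinite.of_injective (fun k => Quotient.mk (SameCycle.setoid σ) (y k)) fun a b hab => ?_
  obtain ⟨n, hn⟩ : SameCycle σ (y a) (y b) := Quotient.exact hab
  have hmono := strictMono_height_zpow_apply hH (y a)
  have hprev : (σ ^ (n - 1)) (y a) = σ⁻¹ (y b) := by
    rw [sub_eq_neg_add, zpow_add, zpow_neg_one, mul_apply, hn]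
  have h1 : n - 1 < 0 := hmono.lt_iff_lt.1 <| by
    simp only [hprev, zpow_zero, one_apply]; linarith [hneg b, hpos a]
  have h2 : -1 < n := hmono.lt_iff_lt.1 <| by
    simp only [hn, zpow_neg_one]; linarith [hneg a, hpos b]
  obtain rfl : n = 0 := by omega
  exact hy (by simpa using hn)

end Height

section Level

variable {α : Type*} {σ τ : Perm α} {ℓ : α → ℤ}

lemma level_zpow_apply (hσ : ∀ x, ℓ (σ x) = ℓ x + 1) (n : ℤ) (x : α) :
    ℓ ((σ ^ n) x) = ℓ x + n := by
  induction n using Int.induction_on with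
  | zero => simp
  | succ n ih => rw [add_comm (n : ℤ), zpow_add, zpow_one, mul_apply, hσ, ih]; ring
  | pred n ih =>
    have := hσ ((σ ^ (-(n : ℤ) - 1)) x)
    rw [← mul_apply, ← zpow_one_add, add_sub_cancel, ih] at this
    omega

lemma nonempty_orbits_equiv_level_zero (hσ : ∀ x, ℓ (σ x) = ℓ x + 1) :
    Nonempty (Orbits σ ≃ {x // ℓ x = 0}) := by
  refine ⟨(Equiv.ofBijective (fun y : {x // ℓ x = 0} => Quotient.mk (SameCycle.setoid σ) y.1)
    ⟨fun y y' h => ?_, fun q => ?_⟩).symm⟩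
  · obtain ⟨n, hn⟩ : SameCycle σ y y' := Quotient.exact h
    have := level_zpow_apply hσ n y
    rw [hn, y.2, y'.2] at this
    obtain rfl : n = 0 := by omega
    exact Subtype.ext (by simpa using hn)
  · induction q using Quotient.inductionOn with | h x => ?_
    refine ⟨⟨(σ ^ (-ℓ x)) x, by rw [level_zpow_apply hσ]; ring⟩, ?_⟩
    exact Quotient.sound
      ⟨ℓ x, by rw [← mul_apply, ← zpow_add, add_neg_cancel, zpow_zero, one_apply]⟩

lemma isConj_of_level_succ (hσ : ∀ x, ℓ (σ x) = ℓ x + 1) (hτ : ∀ x, ℓ (τ x) = ℓ x + 1) :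
    IsConj σ τ :=
  isConj_of_isFree (isFree_of_lt_height (H := ℓ) (by simp [hσ]))
    (isFree_of_lt_height (H := ℓ) (by simp [hτ]))
    ((nonempty_orbits_equiv_level_zero hσ).some.trans
      (nonempty_orbits_equiv_level_zero hτ).some.symm)

lemma exists_perm_level_succ (hℓ : ∀ n, Nonempty ({x // ℓ x = n} ≃ {x // ℓ x = 0})) :
    ∃ S : Perm α, ∀ x, ℓ (S x) = ℓ x + 1 := by
  let e : α ≃ ℤ × {x // ℓ x = 0} := (Equiv.sigmaFiberEquiv ℓ).symm.trans
    ((Equiv.sigmaCongrRight fun n => (hℓ n).some).trans (Equiv.sigmaEquivProd _ _))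
  have he : ∀ x, (e x).1 = ℓ x := fun x => rfl
  refine ⟨e.symm.permCongr ((Equiv.addRight 1).prodCongr (Equiv.refl _)), fun x => ?_⟩
  rw [← he, ← he x]
  simp

end Level

section InfiniteOrbits

open Cardinal

variable {α : Type*}

lemma exists_isConj_mul_of_level {f : Perm α} (ℓ : α → ℤ) (hf : ∀ x, ℓ (f x) = ℓ x)
    (hℓ : ∀ n, Nonempty ({x // ℓ x = n} ≃ {x // ℓ x = 0})) : ∃ a : Perm α, IsConj a (a * f) := by
  obtain ⟨S, hS⟩ := exists_perm_level_succ hℓ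
  exact ⟨S, isConj_of_level_succ hS fun x => by rw [mul_apply, hS, hf]⟩

theorem exists_isConj_mul_of_infinite_orbits (f : Perm α) [Infinite (Orbits f)] :
    ∃ a : Perm α, IsConj a (a * f) := by
  have hQ : #(Orbits f × ℤ) = #(Orbits f) := by
    rw [mk_prod, mk_int, lift_aleph0, lift_uzero]
    exact mul_eq_left (aleph0_le_mk _) (aleph0_le_mk _) aleph0_ne_zero
  have hα : #α = #(Orbits f) := le_antisymm
    ((mk_le_of_surjective (orbitParam_surjective f)).trans hQ.le)
    (mk_le_of_surjective Quotient.mk_surjective)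
  obtain ⟨c⟩ : Nonempty (Orbits f ≃ Orbits f × ℤ) := Cardinal.eq.1 hQ.symm
  let ℓ : α → ℤ := fun x => (c (Quotient.mk _ x)).2
  have hfib : ∀ n, #{x // ℓ x = n} = #α := fun n => by
    refine le_antisymm (mk_subtype_le _) (hα.le.trans (mk_le_of_injective (f :=
      fun q => (⟨(c.symm (q, n)).out, by simp [ℓ]⟩ : {x // ℓ x = n})) fun q q' h => ?_))
    have := congrArg (Quotient.mk (SameCycle.setoid f)) (congrArg Subtype.val h)
    simpa only [Quotient.out_eq, c.symm.injective.eq_iff, Prod.mk.injEq, and_true] using this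
  refine exists_isConj_mul_of_level ℓ (fun x => ?_) fun n =>
    Cardinal.eq.1 ((hfib n).trans (hfib 0).symm)
  have : f.SameCycle (f x) x := sameCycle_apply_left.2 (SameCycle.refl f x)
  simp only [ℓ, Quotient.sound (s := SameCycle.setoid f) this]

end InfiniteOrbits

section SwapRange

variable {R : Type*}

open Classical in
/-- The involution of `ℤ ⊕ R` exchanging `inl (p r)` with `inr r` for every `r`. -/
noncomputable def swapRange (p : R → ℤ) (hp : Injective p) : Perm (ℤ ⊕ R) :=
  Involutive.toPerm
    (Sum.elim (fun n => if h : ∃ r, p r = n then Sum.inr h.choose else Sum.inl n)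
      fun r => Sum.inl (p r)) <| by
    rintro (n | r)
    · by_cases h : ∃ r, p r = n
      · simp [h, h.choose_spec]
      · simp [h]
    · have h : ∃ r', p r' = p r := ⟨r, rfl⟩
      simp [hp h.choose_spec]

variable {p : R → ℤ} {hp : Injective p}

open Classical in
lemma swapRange_inl (n : ℤ) : swapRange p hp (Sum.inl n) =
    if h : ∃ r, p r = n then Sum.inr h.choose else Sum.inl n := rfl

lemma swapRange_inl_apply (r : R) : swapRange p hp (Sum.inl (p r)) = Sum.inr r := by
  have h : ∃ r', p r' = p r := ⟨r, rfl⟩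
  rw [swapRange_inl, dif_pos h, hp h.choose_spec]

lemma swapRange_inr (r : R) : swapRange p hp (Sum.inr r) = Sum.inl (p r) := rfl

lemma swapRange_inl_of_notMem {n : ℤ} (hn : n ∉ Set.range p) :
    swapRange p hp (Sum.inl n) = Sum.inl n := by
  rw [swapRange_inl, dif_neg (Set.mem_range.not.1 hn)]

lemma swapRange_inv : (swapRange p hp)⁻¹ = swapRange p hp := Involutive.toPerm_symm _

end SwapRange

section DyadicInsert

variable {R : Type*} {ι : R → ℕ}

def insertPos (ι : R → ℕ) (r : R) : ℤ := -2 ^ (ι r + 1)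

lemma insertPos_injective (hι : Injective ι) : Injective (insertPos ι) := fun r r' h => by
  have : (2 : ℤ) ^ (ι r + 1) = 2 ^ (ι r' + 1) := by simpa [insertPos] using h
  exact hι (by simpa using Int.pow_right_injective (le_refl 2) this)

def insertHeight (ι : R → ℕ) : ℤ ⊕ R → ℤ :=
  Sum.elim (fun n => 2 * n) fun r => 2 * insertPos ι r + 1

@[simp]
lemma insertHeight_inl (n : ℤ) : insertHeight ι (Sum.inl n) = 2 * n := rfl

lemma insertHeight_inr_neg (r : R) : insertHeight ι (Sum.inr r) < 0 := by
  have : (0 : ℤ) < 2 ^ (ι r + 1) := by positivity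
  simp only [insertHeight, Sum.elim_inr, insertPos]
  omega

/-- `dyadicPerm` on `ℤ`, with each `r : R` inserted into its chain between `-2 ^ (ι r + 1)` and
`2 ^ (ι r + 1)`. -/
noncomputable def dyadicInsert (hι : Injective ι) : Perm (ℤ ⊕ R) :=
  Perm.sumCongr dyadicPerm 1 * swapRange (insertPos ι) (insertPos_injective hι)

variable (hι : Injective ι)

lemma dyadicInsert_inr (r : R) : dyadicInsert hι (Sum.inr r) = Sum.inl (2 ^ (ι r + 1)) := by
  simp [dyadicInsert, swapRange_inr, dyadicPerm_apply, insertPos, dyadicStep_neg_two_pow]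

lemma insertHeight_lt_dyadicInsert (x : ℤ ⊕ R) :
    insertHeight ι x < insertHeight ι (dyadicInsert hι x) := by
  rcases x with n | r
  · by_cases hn : n ∈ Set.range (insertPos ι)
    · obtain ⟨r, rfl⟩ := hn
      simp [dyadicInsert, swapRange_inl_apply, insertHeight]
    · simp only [dyadicInsert, mul_apply, swapRange_inl_of_notMem hn, Perm.sumCongr_apply,
        Sum.map_inl, dyadicPerm_apply, insertHeight_inl]
      linarith [lt_dyadicStep n]
  · have : (0 : ℤ) < 2 ^ (ι r + 1) := by positivity
    rw [dyadicInsert_inr, insertHeight_inl]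
    linarith [insertHeight_inr_neg (ι := ι) r]

lemma insertHeight_swapRange_inl_neg {m : ℤ} (hm : m < 0) :
    insertHeight ι (swapRange (insertPos ι) (insertPos_injective hι) (Sum.inl m)) < 0 := by
  by_cases h : m ∈ Set.range (insertPos ι)
  · obtain ⟨r, rfl⟩ := h
    rw [swapRange_inl_apply]
    exact insertHeight_inr_neg r
  · rw [swapRange_inl_of_notMem h, insertHeight_inl]
    omega

lemma insertHeight_dyadicInsert_symm_neg (k : ℕ) :
    insertHeight ι ((dyadicInsert hι)⁻¹ (Sum.inl (2 ^ (k + 1)))) < 0 := by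
  have h : (Perm.sumCongr dyadicPerm (1 : Perm R))⁻¹ (Sum.inl (2 ^ (k + 1))) =
      Sum.inl (-2 ^ (k + 1)) := by
    rw [inv_eq_iff_eq, Perm.sumCongr_apply, Sum.map_inl, dyadicPerm_apply, dyadicStep_neg_two_pow]
  rw [dyadicInsert, mul_inv_rev, mul_apply, h, swapRange_inv]
  exact insertHeight_swapRange_inl_neg hι (neg_neg_of_pos (by positivity))

end DyadicInsert

section Shift

variable {R : Type*}

lemma exists_inr_eq_of_shift {F : Perm (ℤ ⊕ R)} (hF : ∀ n, F (Sum.inl n) = Sum.inl (n + 1))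
    (r : R) : ∃ r', F (Sum.inr r) = Sum.inr r' := by
  rcases h : F (Sum.inr r) with m | r'
  · exact absurd (F.injective (h.trans (by rw [hF, sub_add_cancel]))) Sum.inr_ne_inl
  · exact ⟨r', rfl⟩

lemma exists_inv_inr_eq_of_shift {F : Perm (ℤ ⊕ R)} (hF : ∀ n, F (Sum.inl n) = Sum.inl (n + 1))
    (r : R) : ∃ r', F⁻¹ (Sum.inr r) = Sum.inr r' := by
  rcases h : F⁻¹ (Sum.inr r) with m | r'
  · rw [inv_eq_iff_eq, hF] at h
    exact absurd h Sum.inr_ne_inl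
  · exact ⟨r', rfl⟩

theorem exists_isConj_mul_of_shift [Countable R] (F : Perm (ℤ ⊕ R))
    (hF : ∀ n, F (Sum.inl n) = Sum.inl (n + 1)) : ∃ a : Perm (ℤ ⊕ R), IsConj a (a * F) := by
  obtain ⟨ι, hι⟩ := exists_injective_nat R
  set W := dyadicInsert hι
  set H := insertHeight ι
  have hW : ∀ x, H x < H (W x) := insertHeight_lt_dyadicInsert hι
  have hWF : ∀ x, H x < H ((W * F) x) := by
    rintro (n | r)
    · have := hW (Sum.inl (n + 1))
      rw [mul_apply, hF]
      simp only [H, insertHeight_inl] at this ⊢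
      linarith
    · obtain ⟨r', hr'⟩ := exists_inr_eq_of_shift hF r
      have : (0 : ℤ) < 2 ^ (ι r' + 1) := by positivity
      rw [mul_apply, hr', dyadicInsert_inr]
      simp only [H, insertHeight_inl]
      linarith [insertHeight_inr_neg (ι := ι) r]
  have hFneg : ∀ x, H x < 0 → H (F⁻¹ x) < 0 := by
    rintro (m | r) hm
    · rw [show F⁻¹ (Sum.inl m) = Sum.inl (m - 1) by rw [inv_eq_iff_eq, hF, sub_add_cancel]]
      simp only [H, insertHeight_inl] at hm ⊢
      omega
    · obtain ⟨r', hr'⟩ := exists_inv_inr_eq_of_shift hF r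
      rw [hr']
      exact insertHeight_inr_neg r'
  let y : ℕ → ℤ ⊕ R := fun k => Sum.inl (2 ^ (k + 1))
  have hy : Injective y := fun a b h => by
    simpa using Int.pow_right_injective (le_refl 2) (Sum.inl_injective h)
  have hypos : ∀ k, 0 ≤ H (y k) := fun k => by
    simp only [y, H, insertHeight_inl]; positivity
  have hWinf := infinite_orbits_of_crossings hW hy hypos (insertHeight_dyadicInsert_symm_neg hι)
  have hWFinf := infinite_orbits_of_crossings hWF hy hypos fun k => by
    rw [mul_inv_rev, mul_apply]
    exact hFneg _ (insertHeight_dyadicInsert_symm_neg hι k)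
  exact ⟨W, isConj_of_isFree (isFree_of_lt_height hW) (isFree_of_lt_height hWF)
    nonempty_equiv_of_countable.some⟩

end Shift

section FiniteOrbits

variable {α : Type*}

lemma injective_zpow_apply_of_period_eq_zero {f : Perm α} {x : α}
    (h : MulAction.period f x = 0) : Injective fun n : ℤ => (f ^ n) x := fun m n hmn => by
  have : f ^ (-n + m) • x = x := by
    simp only at hmn
    rw [Perm.smul_def, zpow_add, mul_apply, hmn, ← mul_apply, ← zpow_add, neg_add_cancel,
      zpow_zero, one_apply]
  rw [MulAction.zpow_smul_eq_iff_period_dvd, h, Nat.cast_zero, zero_dvd_iff] at this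
  omega

lemma finite_of_period_pos {f : Perm α} [Finite (Orbits f)]
    (h : ∀ x : α, 0 < MulAction.period f x) : Finite α := by
  refine Finite.of_surjective
    (fun p : Σ q : Orbits f, Fin (MulAction.period f q.out) => (f ^ (p.2 : ℕ)) p.1.out) fun x => ?_
  obtain ⟨⟨q, n⟩, rfl⟩ := orbitParam_surjective f x
  have hp : (0 : ℤ) < MulAction.period f q.out := by exact_mod_cast h _
  refine ⟨⟨q, (n % MulAction.period f q.out).toNat, by
    have := Int.emod_lt_of_pos n hp; omega⟩, ?_⟩
  simp only [orbitParam]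
  rw [← zpow_natCast, Int.toNat_of_nonneg (Int.emod_nonneg n hp.ne'), ← Perm.smul_def,
    ← Perm.smul_def, MulAction.zpow_mod_period_smul]

lemma exists_injective_zpow_apply [Infinite α] (f : Perm α) [Finite (Orbits f)] :
    ∃ x, Injective fun n : ℤ => (f ^ n) x := by
  by_contra! h
  have := finite_of_period_pos (f := f) fun x =>
    Nat.pos_of_ne_zero fun h0 => h x (injective_zpow_apply_of_period_eq_zero h0)
  exact not_finite α

theorem exists_isConj_mul_of_finite_orbits [Infinite α] (f : Perm α) [Finite (Orbits f)] :
    ∃ a : Perm α, IsConj a (a * f) := by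
  have : Countable α := (orbitParam_surjective f).countable
  obtain ⟨x, hx⟩ := exists_injective_zpow_apply f
  classical
  let e : ℤ ⊕ {y // y ∉ Set.range fun n : ℤ => (f ^ n) x} ≃ α :=
    ((Equiv.ofInjective _ hx).sumCongr (Equiv.refl _)).trans (Equiv.sumCompl _)
  have he : ∀ n, e (Sum.inl n) = (f ^ n) x := fun n => rfl
  obtain ⟨a, ha⟩ := exists_isConj_mul_of_shift (e.symm.permCongr f) fun n => by
    rw [Equiv.permCongr_apply, Equiv.symm_symm, Equiv.symm_apply_eq, he, he, add_comm,
      zpow_add, zpow_one, mul_apply]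
  refine ⟨e.permCongr a, ?_⟩
  simpa [← Equiv.permCongr_symm] using e.permCongrHom.toMonoidHom.map_isConj ha

end FiniteOrbits

end Ore

/-- Every permutation of an infinite set is a commutator. -/
theorem stmt0 {Ω : Type*} [Infinite Ω] (f : Equiv.Perm Ω) :
    ∃ g h : Equiv.Perm Ω, f = g⁻¹ * h⁻¹ * g * h := by
  rcases finite_or_infinite (Ore.Orbits f) with hfin | hinf
  · obtain ⟨a, ha⟩ := Ore.exists_isConj_mul_of_finite_orbits f
    exact Ore.exists_eq_commutator_of_isConj_mul ha
  · obtain ⟨a, ha⟩ := Ore.exists_isConj_mul_of_infinite_orbits f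
    exact Ore.exists_eq_commutator_of_isConj_mul ha
end

section
/- If Σ₁ and Σ₂ are moieties of an infinite set Ω with Σ₁ ∩ Σ₂ a moiety and Σ₁ ∪ Σ₂ = Ω, and U, V ⊆ Sym(Ω) are closed under inverses with Σ₁ full with respect to U and Σ₂ full with respect to V, then Sym(Ω) = (UV)⁴V ∪ (VU)⁴U. -/
open Pointwise

/-- A moiety of `Ω` is a subset of full cardinality whose complement also has
full cardinality. -/
def IsMoiety {Ω : Type*} (A : Set Ω) : Prop :=
  Cardinal.mk A = Cardinal.mk Ω ∧ Cardinal.mk ↥(Aᶜ) = Cardinal.mk Ω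

/-- `A` is full with respect to `U ⊆ Sym(Ω)` if every permutation of `A` is induced
by an element of `U` stabilizing `A` setwise. -/
def IsFull {Ω : Type*} (U : Set (Equiv.Perm Ω)) (A : Set Ω) : Prop :=
  ∀ σ : Equiv.Perm A, ∃ f ∈ U, f '' A = A ∧ ∀ a : A, f a = (σ a : Ω)

/-!
Write `C = A ∩ B`. As `A ∪ B = Ω`, each `g` maps `|Ω|` points of `A` or of `B` into `C`; say of
`A`. For `u₀ ∈ U` stabilising `A`, the set `T` of points that `g u₀⁻¹` sends to `Bᶜ` then misses
`|Ω|` points of `A`, so some `v u ∈ VU` moves `T` into `C` with `|Ω|` points of `C` to spare. Now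
`k = g u₀⁻¹ (v u)⁻¹` sends only the points of some `D ⊆ C` with `|C \ D| = |Ω|` to `Bᶜ`, and a
factor `v₁ u₁ ∈ VU` agreeing with `k` off `D` leaves a permutation supported on `D`. Spreading `ℤ`
disjoint copies of `D` through `C`, such a permutation is a commutator `[w, s]` of permutations
supported in `C` (`w` acts on the copies of index `≥ 0`, `s` shifts the copies). Finally
`[w, s] = [v₂, u₂]` for any `v₂ ∈ V` agreeing with `w` on `B` and `u₂ ∈ U` agreeing with `s` on
`A`, because the discrepancies live on `Bᶜ` and `Aᶜ`, which are disjoint from each other and from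
`C`. Altogether `g = v₁ u₁ v₂ u₂ v₂⁻¹ u₂⁻¹ v u u₀ ∈ (VU)⁴U`.
-/

open scoped Cardinal
open Set Equiv Equiv.Perm

lemma Cardinal.mk_eq_of_subset {Ω : Type*} {s t : Set Ω} (hst : s ⊆ t) (hs : #s = #Ω) :
    #t = #Ω :=
  (Cardinal.mk_set_le t).antisymm (hs ▸ Cardinal.mk_le_mk_of_subset hst)

lemma Cardinal.mk_eq_or_mk_eq_of_mk_union_eq {Ω : Type*} [Infinite Ω] {s t : Set Ω}
    (h : #↥(s ∪ t) = #Ω) : #s = #Ω ∨ #t = #Ω := by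
  by_contra! hst
  have hlt : #s + #t < #Ω := Cardinal.add_lt_of_lt (Cardinal.infinite_iff.mp ‹_›)
    ((Cardinal.mk_set_le s).lt_of_ne hst.1) ((Cardinal.mk_set_le t).lt_of_ne hst.2)
  exact ((Cardinal.mk_union_le s t).trans_lt hlt).ne h

lemma Cardinal.exists_subset_mk_eq_mk_sdiff_eq {α : Type*} {s : Set α} (hs : ℵ₀ ≤ #s) :
    ∃ t ⊆ s, #t = #s ∧ #↥(s \ t) = #s := by
  obtain ⟨e⟩ := Cardinal.eq.mp (Cardinal.add_eq_self hs).symm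
  have hmk : ∀ R : Set (s ⊕ s), #↥(Subtype.val '' (e ⁻¹' R)) = #R := fun R => by
    rw [Cardinal.mk_image_eq Subtype.val_injective]
    exact Cardinal.mk_preimage_equiv e R
  have hdiff := image_compl_eq_range_sdiff_image Subtype.val_injective (s := e ⁻¹' range Sum.inl)
  rw [Subtype.range_coe, ← preimage_compl, compl_range_inl] at hdiff
  refine ⟨Subtype.val '' (e ⁻¹' range Sum.inl), Subtype.coe_image_subset _ _, ?_, ?_⟩
  · rw [hmk, Cardinal.mk_range_eq _ Sum.inl_injective]
  · rw [← hdiff, hmk, Cardinal.mk_range_eq _ Sum.inr_injective]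

lemma Equiv.Perm.exists_image_eq_of_mk_eq {α : Type*} {s t : Set α} (h : #s = #t)
    (hc : #↥sᶜ = #↥tᶜ) : ∃ π : Perm α, π '' s = t := by
  classical
  obtain ⟨e⟩ := Cardinal.eq.mp h
  obtain ⟨f⟩ := Cardinal.eq.mp hc
  refine ⟨(Set.sumCompl s).symm.trans ((Equiv.sumCongr e f).trans (Set.sumCompl t)), ?_⟩
  rw [image_eq_range]
  conv_rhs => rw [← Subtype.range_coe (s := t), ← e.surjective.range_comp]
  congr 1
  ext x
  simp

section Support

variable {Ω : Type*}

lemma Equiv.Perm.apply_mem_iff_of_image_eq {f : Perm Ω} {A : Set Ω} (h : f '' A = A) (x : Ω) :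
    f x ∈ A ↔ x ∈ A := by
  conv_lhs => rw [← h]
  exact f.injective.mem_set_image

lemma Equiv.Perm.apply_mem_iff_of_forall_notMem {f : Perm Ω} {D : Set Ω}
    (hf : ∀ x ∉ D, f x = x) (x : Ω) : f x ∈ D ↔ x ∈ D := by
  refine ⟨fun hx => ?_, fun hx => ?_⟩
  · by_contra h
    exact h (hf x h ▸ hx)
  · by_contra h
    exact h (by rwa [f.injective (hf _ h)])

lemma Equiv.Perm.image_eq_of_forall_notMem {f : Perm Ω} {S P : Set Ω} (hf : ∀ x ∉ S, f x = x)
    (hSP : S ⊆ P) : f '' P = P := by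
  suffices f ⁻¹' P = P by conv_lhs => rw [← this, f.image_preimage]
  ext x
  by_cases hx : x ∈ S
  · exact iff_of_true (hSP ((apply_mem_iff_of_forall_notMem hf x).mpr hx)) (hSP hx)
  · simp [hf x hx]

lemma Equiv.Perm.commute_of_forall_mem {f g : Perm Ω} {P Q : Set Ω} (hf : ∀ x ∈ P, f x = x)
    (hg : ∀ x ∈ Q, g x = x) (hPQ : P ∪ Q = univ) : Commute f g :=
  Disjoint.commute fun x => (hPQ ▸ mem_univ x : x ∈ P ∪ Q).imp (hf x) (hg x)

end Support

lemma Equiv.Perm.exists_commutator_eq_prodCongrLeft {X : Type*} (σ : Perm X) :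
    ∃ w s : Perm (X × ℤ),
      w * s * w⁻¹ * s⁻¹ = prodCongrLeft fun i : ℤ => if i = 0 then σ else 1 := by
  refine ⟨prodCongrLeft fun i : ℤ => if 0 ≤ i then σ else 1,
    prodCongrRight fun _ => Equiv.addRight 1, ?_⟩
  rw [mul_inv_eq_iff_eq_mul, mul_inv_eq_iff_eq_mul]
  ext ⟨x, i⟩ : 1
  by_cases h : i = -1
  · subst h
    simp
  · have h₁ : i + 1 ≠ 0 := by omega
    have h₂ : 0 ≤ i + 1 ↔ 0 ≤ i := by omega
    simp [h₁, h₂]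

lemma Equiv.Perm.exists_commutator_eq_of_forall_notMem {Ω : Type*} {m : Perm Ω} {D S : Set Ω}
    (hm : ∀ x ∉ D, m x = x) (hDS : D ⊆ S) (hcard : #D * ℵ₀ ≤ #↥(S \ D)) :
    ∃ w s : Perm Ω, (∀ x ∉ S, w x = x) ∧ (∀ x ∉ S, s x = x) ∧ w * s * w⁻¹ * s⁻¹ = m := by
  classical
  obtain ⟨e⟩ : Nonempty (D × ℤ ↪ ↥(S \ D)) := by
    rw [← Cardinal.le_def]
    simpa [Cardinal.mk_prod] using hcard
  have he : ∀ p, (e p : Ω) ∉ D := fun p => (e p).2.2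
  let ι : D × ℤ ↪ Ω := ⟨fun p => if p.2 = 0 then p.1 else e p, by
    rintro ⟨δ, i⟩ ⟨δ', j⟩ h
    by_cases hi : i = 0 <;> by_cases hj : j = 0 <;> simp [hi, hj] at h
    · simp [hi, hj, Subtype.ext h]
    · exact absurd (h ▸ δ.2) (he _)
    · exact absurd (h ▸ δ'.2) (he _)
    · simpa using e.injective (Subtype.ext h)⟩
  have hι : ∀ p, ι p = if p.2 = 0 then (p.1 : Ω) else e p := fun _ => rfl
  have hιS : ∀ x ∉ S, x ∉ range ι := by
    rintro x hx ⟨⟨δ, i⟩, rfl⟩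
    by_cases hi : i = 0 <;> simp [hι, hi] at hx
    exacts [hx (hDS δ.2), hx (e _).2.1]
  obtain ⟨w₀, s₀, h₀⟩ := exists_commutator_eq_prodCongrLeft
    (m.subtypePerm (apply_mem_iff_of_forall_notMem hm))
  refine ⟨viaEmbeddingHom ι w₀, viaEmbeddingHom ι s₀,
    fun x hx => viaEmbedding_apply_of_notMem _ _ _ (hιS x hx),
    fun x hx => viaEmbedding_apply_of_notMem _ _ _ (hιS x hx), ?_⟩
  rw [← map_inv, ← map_inv, ← map_mul, ← map_mul, ← map_mul, h₀]
  ext x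
  by_cases hx : x ∈ range ι
  · obtain ⟨⟨δ, i⟩, rfl⟩ := hx
    rw [viaEmbeddingHom_apply, viaEmbedding_apply]
    by_cases hi : i = 0 <;> simp [hι, hi, hm _ (he _)]
  · have hxD : x ∉ D := fun h => hx ⟨(⟨x, h⟩, 0), by simp [hι]⟩
    rw [viaEmbeddingHom_apply, viaEmbedding_apply_of_notMem _ _ _ hx, hm x hxD]

lemma commutator_mul_mul_eq {G : Type*} [Group G] {w s a b : G} (has : Commute a s)
    (hab : Commute a b) (hbw : Commute b w) :
    (w * a) * (s * b) * (w * a)⁻¹ * (s * b)⁻¹ = w * s * w⁻¹ * s⁻¹ := by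
  calc (w * a) * (s * b) * (w * a)⁻¹ * (s * b)⁻¹
      = w * (a * s) * (b * a⁻¹) * w⁻¹ * b⁻¹ * s⁻¹ := by group
    _ = w * s * (b * w⁻¹) * b⁻¹ * s⁻¹ := by
        rw [has.eq, hab.inv_left.eq.symm]
        group
    _ = w * s * w⁻¹ * s⁻¹ := by
        rw [hbw.inv_right.eq]
        group

namespace IsFull

variable {Ω : Type*} {U V : Set (Perm Ω)} {A B : Set Ω}

lemma exists_mem_eqOn (hU : IsFull U A) {π : Perm Ω} (hπ : π '' A = A) :
    ∃ u ∈ U, u '' A = A ∧ EqOn u π A := by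
  obtain ⟨u, hu, huA, hσ⟩ := hU (π.subtypePerm (apply_mem_iff_of_image_eq hπ))
  exact ⟨u, hu, huA, fun x hx => hσ ⟨x, hx⟩⟩

lemma exists_mem_image_eq (hU : IsFull U A) {s t : Set Ω} (hs : s ⊆ A) (ht : t ⊆ A)
    (h : #s = #t) (hd : #↥(A \ s) = #↥(A \ t)) : ∃ u ∈ U, u '' A = A ∧ u '' s = t := by
  have hmk : ∀ r ⊆ A, #↥(Subtype.val ⁻¹' r : Set A) = #r := fun r hr =>
    Cardinal.mk_preimage_of_injective_of_subset_range _ _ Subtype.val_injective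
      (by simpa using hr)
  have hcompl : ∀ r : Set Ω, (Subtype.val ⁻¹' r : Set A)ᶜ = Subtype.val ⁻¹' (A \ r) :=
    fun r => by ext; simp
  obtain ⟨σ, hσ⟩ := exists_image_eq_of_mk_eq (s := Subtype.val ⁻¹' s) (t := Subtype.val ⁻¹' t)
    (by rw [hmk s hs, hmk t ht, h])
    (by rw [hcompl, hcompl, hmk _ sdiff_subset, hmk _ sdiff_subset, hd])
  obtain ⟨u, hu, huA, huσ⟩ := hU σ
  refine ⟨u, hu, huA, ?_⟩
  calc u '' s = u '' (Subtype.val '' (Subtype.val ⁻¹' s : Set A)) := by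
        rw [Subtype.image_preimage_coe, inter_eq_right.mpr hs]
    _ = Subtype.val '' (σ '' (Subtype.val ⁻¹' s)) := by
        rw [image_image, image_image]
        exact image_congr fun a _ => huσ a
    _ = t := by rw [hσ, Subtype.image_preimage_coe, inter_eq_right.mpr ht]

lemma exists_mem_image_subset [Infinite Ω] (hU : IsFull U A) {s t : Set Ω} (hs : s ⊆ A)
    (ht : t ⊆ A) (htΩ : #t = #Ω) (hd : #↥(A \ s) = #Ω) :
    ∃ u ∈ U, u '' A = A ∧ u '' s ⊆ t := by
  have hΩ : ℵ₀ ≤ #Ω := Cardinal.infinite_iff.mp ‹_›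
  obtain ⟨t₁, ht₁, ht₁Ω, htt₁⟩ := Cardinal.exists_subset_mk_eq_mk_sdiff_eq (htΩ ▸ hΩ)
  obtain ⟨r, hr, hrΩ, hdr⟩ := Cardinal.exists_subset_mk_eq_mk_sdiff_eq (hd ▸ hΩ)
  obtain ⟨u, hu, huA, hut₁⟩ :=
    hU.exists_mem_image_eq (union_subset hs (hr.trans sdiff_subset)) (ht₁.trans ht)
    (by rw [Cardinal.mk_eq_of_subset subset_union_right (hrΩ.trans hd), ht₁Ω, htΩ])
    (by rw [← sdiff_sdiff, hdr, hd,
      (Cardinal.mk_eq_of_subset (sdiff_subset_sdiff_left ht) (htt₁.trans htΩ)).symm])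
  exact ⟨u, hu, huA, (image_mono subset_union_left).trans (hut₁.trans_subset ht₁)⟩

lemma exists_mem_commutator_eq (hAB : A ∪ B = univ) (hU : IsFull U A) (hV : IsFull V B)
    {w s : Perm Ω} (hw : ∀ x ∉ A ∩ B, w x = x) (hs : ∀ x ∉ A ∩ B, s x = x) :
    ∃ v ∈ V, ∃ u ∈ U, v * u * v⁻¹ * u⁻¹ = w * s * w⁻¹ * s⁻¹ := by
  obtain ⟨u, hu, -, hus⟩ :=
    hU.exists_mem_eqOn (image_eq_of_forall_notMem hs inter_subset_left)
  obtain ⟨v, hv, -, hvw⟩ :=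
    hV.exists_mem_eqOn (image_eq_of_forall_notMem hw inter_subset_right)
  have hu' : ∀ x ∈ A, (s⁻¹ * u) x = x := fun x hx => by
    rw [Perm.mul_apply, hus hx, Perm.inv_def, symm_apply_apply]
  have hv' : ∀ x ∈ B, (w⁻¹ * v) x = x := fun x hx => by
    rw [Perm.mul_apply, hvw hx, Perm.inv_def, symm_apply_apply]
  refine ⟨v, hv, u, hu, ?_⟩
  rw [← mul_inv_cancel_left w v, ← mul_inv_cancel_left s u]
  refine commutator_mul_mul_eq ?_ ?_ ?_
  · exact commute_of_forall_mem (Q := (A ∩ B)ᶜ) hv' hs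
      (compl_subset_iff_union.mp (compl_subset_compl.mpr inter_subset_right))
  · exact commute_of_forall_mem hv' hu' ((union_comm B A).trans hAB)
  · exact commute_of_forall_mem (Q := (A ∩ B)ᶜ) hu' hw
      (compl_subset_iff_union.mp (compl_subset_compl.mpr inter_subset_left))

end IsFull

section Decomposition

variable {Ω : Type*} [Infinite Ω] {U V : Set (Perm Ω)} {A B : Set Ω}

lemma exists_mem_mul_image_subset_inter (hAB : A ∪ B = univ) (hU : IsFull U A)
    (hV : IsFull V B) (hC : #↥(A ∩ B) = #Ω) {T : Set Ω} (hT : #↥(A \ T) = #Ω) :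
    ∃ v ∈ V, ∃ u ∈ U, (v * u) '' T ⊆ A ∩ B ∧ #↥((A ∩ B) \ (v * u) '' T) = #Ω := by
  have hΩ : ℵ₀ ≤ #Ω := Cardinal.infinite_iff.mp ‹_›
  obtain ⟨C, hCsub, hCΩ, hdC⟩ := Cardinal.exists_subset_mk_eq_mk_sdiff_eq (hC ▸ hΩ)
  rw [hC] at hCΩ hdC
  obtain ⟨u, hu, huA, huT⟩ := hU.exists_mem_image_subset (t := C) (inter_subset_left (t := T))
    (hCsub.trans inter_subset_left) hCΩ (by rwa [sdiff_self_inter])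
  have hAcB : Aᶜ ⊆ B := compl_subset_iff_union.mpr hAB
  obtain ⟨v, hv, -, hvC⟩ := hV.exists_mem_image_subset
    (union_subset (hCsub.trans inter_subset_right) hAcB) (hCsub.trans inter_subset_right) hCΩ
    (Cardinal.mk_eq_of_subset (fun x hx => ⟨hx.1.2, by simp [hx.1.1, hx.2]⟩) hdC)
  have hvuT : (v * u) '' T ⊆ C := by
    rw [Perm.coe_mul, image_comp]
    refine (image_mono ?_).trans hvC
    rintro _ ⟨x, hx, rfl⟩
    by_cases hxA : x ∈ A
    · exact Or.inl (huT (mem_image_of_mem u ⟨hxA, hx⟩))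
    · exact Or.inr ((apply_mem_iff_of_image_eq huA x).not.mpr hxA)
  exact ⟨v, hv, u, hu, hvuT.trans hCsub,
    Cardinal.mk_eq_of_subset (sdiff_subset_sdiff_right hvuT) hdC⟩

lemma mem_pow_three_of_preimage_compl_subset_inter (hAB : A ∪ B = univ) (hU : IsFull U A)
    (hV : IsFull V B) (hU' : U⁻¹ = U) (hV' : V⁻¹ = V) {k : Perm Ω}
    (hkD : k ⁻¹' Bᶜ ⊆ A ∩ B) (hk : #↥((A ∩ B) \ k ⁻¹' Bᶜ) = #Ω) : k ∈ (V * U) ^ 3 := by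
  set D := k ⁻¹' Bᶜ
  have hΩ : ℵ₀ ≤ #Ω := Cardinal.infinite_iff.mp ‹_›
  obtain ⟨u₁, hu₁, -, hu₁D⟩ := hU.exists_mem_image_eq (hkD.trans inter_subset_left)
    (compl_subset_iff_union.mpr ((union_comm B A).trans hAB)) (Cardinal.mk_preimage_equiv k Bᶜ)
    (by rw [sdiff_compl, Cardinal.mk_eq_of_subset sdiff_subset hk,
      Cardinal.mk_eq_of_subset (t := A \ D) (fun x hx => ⟨hx.1.1, hx.2⟩) hk])
  have hu₁D' : u₁ ⁻¹' Bᶜ = D := by rw [← hu₁D, preimage_image_eq _ u₁.injective]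
  have hu₁B : u₁ ⁻¹' B = k ⁻¹' B :=
    compl_injective (by rw [← preimage_compl, ← preimage_compl, hu₁D'])
  have hkB : (k * u₁⁻¹) '' B = B := by
    rw [Perm.coe_mul, image_comp, Perm.inv_def, image_symm_eq_preimage, hu₁B, k.image_preimage]
  obtain ⟨v₁, hv₁, -, hv₁k⟩ := hV.exists_mem_eqOn hkB
  have hm : ∀ x ∉ D, ((v₁ * u₁)⁻¹ * k) x = x := fun x hx => by
    have hxB : u₁ x ∈ B := by
      rw [← mem_preimage, hu₁B]
      simpa [D] using hx
    rw [Perm.mul_apply, Perm.inv_eq_iff_eq, Perm.mul_apply, hv₁k hxB]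
    simp
  obtain ⟨w, s, hw, hs, hws⟩ := exists_commutator_eq_of_forall_notMem hm hkD
    (hk ▸ (mul_le_mul' (Cardinal.mk_set_le D) hΩ).trans (Cardinal.mul_eq_self hΩ).le)
  obtain ⟨v₂, hv₂, u₂, hu₂, hvu⟩ := IsFull.exists_mem_commutator_eq hAB hU hV hw hs
  have hdecomp : k = v₁ * u₁ * (v₂ * u₂) * (v₂⁻¹ * u₂⁻¹) := by
    rw [← mul_inv_cancel_left (v₁ * u₁) k, ← hws, ← hvu]
    group
  rw [hdecomp, pow_three']
  exact mul_mem_mul (mul_mem_mul (mul_mem_mul hv₁ hu₁) (mul_mem_mul hv₂ hu₂))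
    (mul_mem_mul (hV' ▸ inv_mem_inv.mpr hv₂) (hU' ▸ inv_mem_inv.mpr hu₂))

lemma mem_pow_four_mul_of_mk_inter_preimage (hAB : A ∪ B = univ) (hU : IsFull U A)
    (hV : IsFull V B) (hU' : U⁻¹ = U) (hV' : V⁻¹ = V) {g : Perm Ω}
    (hg : #↥(A ∩ g ⁻¹' (A ∩ B)) = #Ω) : g ∈ (V * U) ^ 4 * U := by
  -- `u₀` only supplies the trailing factor in `U`.
  obtain ⟨u₀, hu₀, hu₀A, -⟩ := hU 1
  set h := g * u₀⁻¹
  have hT : #↥(A \ h ⁻¹' Bᶜ) = #Ω := by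
    refine Cardinal.mk_eq_of_subset ?_ ((Cardinal.mk_image_eq u₀.injective).trans hg)
    rintro _ ⟨x, ⟨hxA, hxg⟩, rfl⟩
    refine ⟨(apply_mem_iff_of_image_eq hu₀A x).mpr hxA, ?_⟩
    simpa [h] using hxg.2
  have hC : #↥(A ∩ B) = #Ω :=
    (Cardinal.mk_preimage_equiv g _).symm.trans (Cardinal.mk_eq_of_subset inter_subset_right hg)
  obtain ⟨v, hv, u, hu, hsub, hcard⟩ := exists_mem_mul_image_subset_inter hAB hU hV hC hT
  have hk : (h * (v * u)⁻¹) ⁻¹' Bᶜ = (v * u) '' (h ⁻¹' Bᶜ) := by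
    rw [Perm.coe_mul, preimage_comp, Perm.inv_def, image_eq_preimage_symm]
  have hkmem := mem_pow_three_of_preimage_compl_subset_inter hAB hU hV hU' hV' (hk ▸ hsub)
    (hk ▸ hcard)
  have hdecomp : g = h * (v * u)⁻¹ * (v * u) * u₀ := by
    simp only [h]
    group
  rw [hdecomp, pow_succ]
  exact mul_mem_mul (mul_mem_mul hkmem (mul_mem_mul hv hu)) hu₀

end Decomposition

theorem stmt1_general {Ω : Type*} [Infinite Ω] (A B : Set Ω)
    (hAB : IsMoiety (A ∩ B))
    (hUnion : A ∪ B = Set.univ)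
    (U V : Set (Equiv.Perm Ω)) (hU : U⁻¹ = U) (hV : V⁻¹ = V)
    (hfullU : IsFull U A) (hfullV : IsFull V B) :
    (U * V) ^ 4 * V ∪ (V * U) ^ 4 * U = Set.univ := by
  refine eq_univ_of_forall fun g => ?_
  have hsplit : (A ∩ g ⁻¹' (A ∩ B)) ∪ (B ∩ g ⁻¹' (B ∩ A)) = g ⁻¹' (A ∩ B) := by
    rw [inter_comm B A, ← union_inter_distrib_right, hUnion, univ_inter]
  rcases Cardinal.mk_eq_or_mk_eq_of_mk_union_eq
    (hsplit ▸ (Cardinal.mk_preimage_equiv g _).trans hAB.1) with hg | hg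
  · exact Or.inr (mem_pow_four_mul_of_mk_inter_preimage hUnion hfullU hfullV hU hV hg)
  · exact Or.inl (mem_pow_four_mul_of_mk_inter_preimage ((union_comm B A).trans hUnion)
      hfullV hfullU hV hU hg)

theorem stmt1 {Ω : Type*} [Infinite Ω] (A B : Set Ω)
    (hA : IsMoiety A) (hB : IsMoiety B) (hAB : IsMoiety (A ∩ B))
    (hUnion : A ∪ B = Set.univ)
    (U V : Set (Equiv.Perm Ω)) (hU : U⁻¹ = U) (hV : V⁻¹ = V)
    (hfullU : IsFull U A) (hfullV : IsFull V B) :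
    (U * V) ^ 4 * V ∪ (V * U) ^ 4 * U = Set.univ :=
  stmt1_general A B hAB hUnion U V hU hV hfullU hfullV
end

section
/- If U ⊆ Sym(Ω) is closed under inverses and some moiety of the infinite set Ω is full with respect to U, then there exists x ∈ Sym(Ω) of order 2 such that (Ux)⁷U²x ∪ (xU)⁷xU² = Sym(Ω). -/
/-!
Split the moiety `A` as `A₀ ∪ C` with `|A₀| = |C| = |Ω|` and let `x` be an involution exchanging
`A₀` with `Aᶜ` and fixing `C`. Then `U` induces every permutation of `M₁ = A`, `V = xUx` every
permutation of `M₂ = xA = C ∪ Aᶜ`, and `M₁ ∪ M₂ = Ω`, `M₁ ∩ M₂ = C`. For `g ∈ Sym(Ω)` the set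
`g⁻¹C` is covered by `M₁ ∩ g⁻¹M₂` and `M₂ ∩ g⁻¹M₁`, so one of them has size `|Ω|`; by the symmetry
`(M₁, U) ↔ (M₂, V)` we may assume it is the first. An element of `VUU` then reduces `g` to some
`q` with `qC ⊆ M₂`, and a suitable `v ∈ V` makes `K = v⁻¹q` fix a large `Z₁ ⊆ C` pointwise while
acting on a disjoint `Z₂ ⊆ C` as a *full* permutation, one with `|Ω|` cycles of every length.
Conjugating by some `u ∈ U` that moves `A₀` into `Z₁` yields a permutation that fixes `A₀` and is
full on `M₂`. Any two such permutations are conjugate by an element of `V`, and `U` contains one,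
so `K ∈ UVUVU`. Altogether `g ∈ VUVUVUVUU = (xU)⁷xU²`, or symmetrically `g ∈ (Ux)⁷U²x`.
-/

open Pointwise

open Equiv Function Set Cardinal MulAction Subgroup

universe u

namespace FullMoiety

theorem exists_subset_mk_eq_mk_diff {α : Type u} (S : Set α) (hS : ℵ₀ ≤ #S) :
    ∃ D ⊆ S, #D = #S ∧ #(S \ D : Set α) = #S := by
  obtain ⟨e⟩ : Nonempty (S ≃ S ⊕ S) := Cardinal.eq.mp (by rw [mk_sum, lift_id, add_eq_self hS])
  have hinj : ∀ {β : Type u} (i : β → S ⊕ S), Injective i →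
      Injective (Subtype.val ∘ e.symm ∘ i) :=
    fun i hi => Subtype.val_injective.comp (e.symm.injective.comp hi)
  refine ⟨range (Subtype.val ∘ e.symm ∘ Sum.inl), ?_, ?_, ?_⟩
  · rintro _ ⟨a, rfl⟩
    exact (e.symm _).2
  · exact mk_range_eq _ (hinj _ Sum.inl_injective)
  · refine le_antisymm (mk_le_mk_of_subset sdiff_subset) ?_
    rw [← mk_range_eq _ (hinj _ Sum.inr_injective)]
    refine mk_le_mk_of_subset ?_
    rintro _ ⟨b, rfl⟩
    refine ⟨(e.symm _).2, ?_⟩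
    rintro ⟨a, ha⟩
    exact Sum.inl_ne_inr (e.symm.injective (Subtype.val_injective ha))

theorem mk_eq_of_subset {Ω : Type u} {S T : Set Ω} (hTS : T ⊆ S) (hT : #T = #Ω) : #S = #Ω :=
  le_antisymm (mk_set_le S) (hT ▸ mk_le_mk_of_subset hTS)

theorem compl_subset_of_union_eq_univ {α : Type*} {S T : Set α} (h : S ∪ T = Set.univ) :
    Tᶜ ⊆ S :=
  compl_subset_iff_union.mpr (union_comm S T ▸ h)

theorem apply_mem_iff_of_forall_notMem {Ω : Type u} {f : Perm Ω} {M : Set Ω}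
    (hf : ∀ a ∉ M, f a = a) (a : Ω) : f a ∈ M ↔ a ∈ M := by
  by_cases ha : a ∈ M
  · refine iff_of_true (by_contra fun h => ?_) ha
    rw [f.injective (hf _ h)] at h
    exact h ha
  · rw [hf a ha]

theorem apply_mem_iff_of_image_eq {Ω : Type u} {f : Perm Ω} {M : Set Ω} (h : f '' M = M)
    (a : Ω) : f a ∈ M ↔ a ∈ M := by
  conv_lhs => rw [← h]
  exact f.injective.mem_set_image

theorem inv_mem_of_inv_eq {G : Type*} [Group G] {U : Set G} (hU : U⁻¹ = U) {u : G}
    (hu : u ∈ U) : u⁻¹ ∈ U :=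
  hU ▸ inv_mem_inv.mpr hu

def PermConj {X Y : Type*} (f : Perm X) (g : Perm Y) : Prop :=
  ∃ e : X ≃ Y, ∀ a, e (f a) = g (e a)

namespace PermConj

variable {X Y Z W : Type*} {f : Perm X} {g : Perm Y} {h : Perm Z}

theorem symm (hfg : PermConj f g) : PermConj g f := by
  obtain ⟨e, he⟩ := hfg
  exact ⟨e.symm, fun b => e.injective (by simp [he])⟩

theorem trans (hfg : PermConj f g) (hgh : PermConj g h) : PermConj f h := by
  obtain ⟨e₁, h₁⟩ := hfg
  obtain ⟨e₂, h₂⟩ := hgh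
  exact ⟨e₁.trans e₂, fun a => by simp [h₁, h₂]⟩

theorem sumCongr {k : Perm W} (hfg : PermConj f g) (hhk : PermConj h k) :
    PermConj (Equiv.sumCongr f h) (Equiv.sumCongr g k) := by
  obtain ⟨e₁, h₁⟩ := hfg
  obtain ⟨e₂, h₂⟩ := hhk
  exact ⟨Equiv.sumCongr e₁ e₂, by rintro (a | a) <;> simp [h₁, h₂]⟩

end PermConj

def cycleModel {ι : Type*} (N : ι → ℕ) : Perm (Σ i, ZMod (N i)) :=
  sigmaCongrRight fun _ => Equiv.addRight 1

@[simp]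
theorem cycleModel_apply {ι : Type*} (N : ι → ℕ) (i : ι) (k : ZMod (N i)) :
    cycleModel N ⟨i, k⟩ = ⟨i, k + 1⟩ :=
  rfl

section CycleModel

variable {ι ι' : Type u} {N : ι → ℕ} {N' : ι' → ℕ}

theorem permConj_cycleModel_of_mk_fiber (h : ∀ n, #{i // N i = n} = #{j // N' j = n}) :
    PermConj (cycleModel N) (cycleModel N') := by
  have e : ∀ n, {i // N i = n} ≃ {j // N' j = n} :=
    fun n => Classical.choice (Cardinal.eq.mp (h n))
  set b : ι ≃ ι' := (sigmaFiberEquiv N).symm.trans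
    ((sigmaCongrRight e).trans (sigmaFiberEquiv N'))
  have hb : ∀ i, N' (b i) = N i := fun i => (e (N i) ⟨i, rfl⟩).2
  refine ⟨sigmaCongr b fun i => (ZMod.ringEquivCongr (hb i).symm).toEquiv, ?_⟩
  rintro ⟨i, k⟩
  simp [sigmaCongr, map_add]

theorem permConj_sumCongr_cycleModel :
    PermConj (Equiv.sumCongr (cycleModel N) (cycleModel N')) (cycleModel (Sum.elim N N')) :=
  ⟨(sumSigmaDistrib fun i => ZMod (Sum.elim N N' i)).symm,
    by rintro (⟨i, k⟩ | ⟨i, k⟩) <;> rfl⟩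

end CycleModel

theorem exists_permConj_cycleModel {X : Type u} (f : Perm X) :
    ∃ (ι : Type u) (N : ι → ℕ), #ι ≤ #X ∧ PermConj f (cycleModel N) := by
  let e := (selfEquivSigmaOrbits (zpowers f) X).trans
    (sigmaCongrRight fun q => orbitZPowersEquiv f q.out)
  have he : ∀ p, e.symm (cycleModel _ p) = f (e.symm p) := by
    rintro ⟨q, k⟩
    rw [cycleModel_apply, add_comm, ← ZMod.intCast_zmod_cast k, ← Int.cast_one, ← Int.cast_add]
    show ((orbitZPowersEquiv f q.out).symm _ : X) = f ((orbitZPowersEquiv f q.out).symm _)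
    rw [orbitZPowersEquiv_symm_apply', orbitZPowersEquiv_symm_apply', zpow_one_add, mul_smul]
    rfl
  refine ⟨_, _, mk_quotient_le, e, fun a => ?_⟩
  conv_lhs => rw [← e.symm_apply_apply a, ← he, apply_symm_apply]

/-- `#I` cycles of every length `n ≥ 1` and `#I` infinite cycles (length `0`, as `ZMod 0 = ℤ`). -/
def IsFullPerm (I : Type u) {X : Type u} (f : Perm X) : Prop :=
  PermConj f (cycleModel (Prod.fst : ℕ × I → ℕ))

theorem mk_subtype_fst_eq {I : Type u} (n : ℕ) : #{p : ℕ × I // p.1 = n} = #I :=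
  Cardinal.mk_congr ⟨fun p => p.1.2, fun i => ⟨(n, i), rfl⟩,
    by rintro ⟨⟨m, i⟩, rfl : m = n⟩; rfl, fun _ => rfl⟩

namespace IsFullPerm

variable {I X Y : Type u} {f : Perm X} {g : Perm Y}

theorem of_permConj (hgf : PermConj g f) (hf : IsFullPerm I f) : IsFullPerm I g :=
  hgf.trans hf

theorem permConj (hf : IsFullPerm I f) (hg : IsFullPerm I g) : PermConj f g :=
  hf.trans hg.symm

theorem of_permConj_cycleModel {ι : Type u} {N : ι → ℕ} (hf : PermConj f (cycleModel N))
    (hN : ∀ n, #{i // N i = n} = #I) : IsFullPerm I f :=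
  hf.trans (permConj_cycleModel_of_mk_fiber fun n => (hN n).trans (mk_subtype_fst_eq n).symm)

theorem sumCongr (hf : IsFullPerm I f) (g : Perm Y) (hI : ℵ₀ ≤ #I) (hY : #Y ≤ #I) :
    IsFullPerm I (Equiv.sumCongr f g) := by
  obtain ⟨ι, N, hι, hg⟩ := exists_permConj_cycleModel g
  refine of_permConj_cycleModel
    ((PermConj.sumCongr hf hg).trans permConj_sumCongr_cycleModel) fun n => ?_
  rw [Cardinal.mk_congr subtypeSum, mk_sum, lift_id, lift_id]
  exact (congrArg (· + _) (mk_subtype_fst_eq n)).trans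
    (add_eq_left hI ((mk_subtype_le _).trans (hι.trans hY)))

theorem of_subtypePerm {S : Set X} (hS : ∀ a, f a ∈ S ↔ a ∈ S)
    (hfS : IsFullPerm I (f.subtypePerm hS)) (hI : ℵ₀ ≤ #I) (hX : #X ≤ #I) :
    IsFullPerm I f := by
  classical
  refine of_permConj ?_ (hfS.sumCongr (f.subtypePerm (p := (· ∉ S)) fun a => (hS a).not) hI
    ((mk_subtype_le _).trans hX))
  exact ⟨(Equiv.sumCompl (· ∈ S)).symm, fun a => by by_cases ha : a ∈ S <;> simp [ha, hS]⟩

theorem subtypePerm_of_extends {S M : Set X} (hSM : S ⊆ M) (hM : ∀ a, f a ∈ M ↔ a ∈ M)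
    {s : Perm S} (hs : IsFullPerm I s) (hfs : ∀ a : S, f a = s a) (hI : ℵ₀ ≤ #I)
    (hMI : #M ≤ #I) : IsFullPerm I (f.subtypePerm hM) := by
  have hS : ∀ a, f a ∈ S ↔ a ∈ S := fun a => by
    refine ⟨fun h => ?_, fun h => hfs ⟨a, h⟩ ▸ (s _).2⟩
    have hb := hfs (s⁻¹ ⟨f a, h⟩)
    rw [← Perm.mul_apply, mul_inv_cancel, Perm.one_apply] at hb
    exact f.injective hb ▸ (s⁻¹ ⟨f a, h⟩).2
  refine of_subtypePerm (S := {a : M | (a : X) ∈ S}) (fun a => hS a) ?_ hI hMI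
  exact hs.of_permConj
    ⟨subtypeSubtypeEquivSubtype fun h => hSM h, fun a => Subtype.ext (hfs ⟨a, a.2⟩)⟩

end IsFullPerm

theorem exists_isFullPerm {I X : Type u} (hI : ℵ₀ ≤ #I) (hX : #X = #I) :
    ∃ f : Perm X, IsFullPerm I f := by
  have hmodel : #(Σ p : ℕ × I, ZMod p.1) = #I := by
    have := Cardinal.infinite_iff.mpr hI
    have (n : ℕ) : Countable (ZMod n) := by cases n <;> dsimp [ZMod] <;> infer_instance
    have e : (Σ p : ℕ × I, ZMod p.1) ≃ I × Σ n : ℕ, ZMod n :=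
      ⟨fun ⟨⟨n, i⟩, k⟩ => (i, ⟨n, k⟩), fun ⟨i, n, k⟩ => ⟨(n, i), k⟩, fun _ => rfl, fun _ => rfl⟩
    rw [Cardinal.mk_congr e, mk_prod, lift_uzero, mk_eq_aleph0 (Σ n : ℕ, ZMod n), lift_aleph0,
      mul_aleph0_eq hI]
  obtain ⟨e⟩ := Cardinal.eq.mp (hX.trans hmodel.symm)
  exact ⟨e.permCongr.symm (cycleModel _), e, fun a => by simp [permCongr_apply]⟩

theorem exists_involution_of_equiv {α : Type u} {S T : Set α} (hST : Disjoint S T) (e : S ≃ T) :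
    ∃ x : Perm α, x * x = 1 ∧ (∀ a : S, x a = e a) ∧ ∀ a ∉ S ∪ T, x a = a := by
  classical
  let σ : Perm (S ⊕ T) := (sumCongr e e.symm).trans (sumComm T S)
  refine ⟨Perm.ofSubtype ((Equiv.Set.union hST).symm.permCongr σ), ?_, fun a => ?_,
    fun a ha => Perm.ofSubtype_apply_of_not_mem _ ha⟩
  · have hσ : σ * σ = 1 := by ext (a | b) <;> simp [σ]
    rw [← map_mul, ← permCongr_mul, hσ, Perm.one_def, permCongr_refl, ← Perm.one_def, map_one]
  · rw [Perm.ofSubtype_apply_of_mem (p := (· ∈ S ∪ T)) _ (Or.inl a.2), permCongr_apply,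
      symm_symm, Equiv.Set.union_apply_left hST a.2]
    simp [σ]

theorem pow_seven_word_eq {M : Type*} [Monoid M] (X W : M) :
    X * W * X * W * (X * W * X) * W * (X * W * X) * W * (X * W * X) * W * W =
      (X * W) ^ 7 * X * W ^ 2 := by
  simp only [pow_succ, pow_zero, one_mul, mul_assoc]

theorem pow_seven_word_eq_of_mul_self_eq_one {M : Type*} [Monoid M] {X : M} (hX : X * X = 1)
    (W : M) :
    W * (X * W * X) * W * (X * W * X) * W * (X * W * X) * W * (X * W * X) * (X * W * X) =
      (W * X) ^ 7 * W ^ 2 * X := by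
  have h : ∀ y, X * (X * y) = y := fun y => by rw [← mul_assoc, hX, one_mul]
  simp only [pow_succ, pow_zero, one_mul, mul_assoc, h]

end FullMoiety

namespace IsFull

open FullMoiety

variable {Ω : Type u} {U : Set (Perm Ω)} {M : Set Ω}

theorem exists_extend (hU : IsFull U M) {S T : Set Ω} (hS : S ⊆ M) (hT : T ⊆ M) (e : S ≃ T)
    (hc : #(M \ S : Set Ω) = #(M \ T : Set Ω)) :
    ∃ u ∈ U, (∀ a, u a ∈ M ↔ a ∈ M) ∧ ∀ a : S, u a = e a := by
  classical
  have hc' : #{a : M // (a : Ω) ∉ S} = #{a : M // (a : Ω) ∉ T} := by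
    rwa [Cardinal.mk_congr (subtypeSubtypeEquivSubtypeInter (· ∈ M) (· ∉ S)),
      Cardinal.mk_congr (subtypeSubtypeEquivSubtypeInter (· ∈ M) (· ∉ T))]
  let σ : Perm M := subtypeCongr
    ((subtypeSubtypeEquivSubtype fun h => hS h).trans
      (e.trans (subtypeSubtypeEquivSubtype fun h => hT h).symm))
    (Classical.choice (Cardinal.eq.mp hc'))
  obtain ⟨u, hu, huM, huσ⟩ := hU σ
  refine ⟨u, hu, apply_mem_iff_of_image_eq huM, fun a => ?_⟩
  rw [huσ ⟨a, hS a.2⟩]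
  simp [σ, subtypeCongr, a.2]
  rfl

theorem exists_mapsTo (hU : IsFull U M) {S T : Set Ω} (hS : S ⊆ M) (hT : T ⊆ M)
    (hST : #S = #T) (hc : #(M \ S : Set Ω) = #(M \ T : Set Ω)) :
    ∃ u ∈ U, (∀ a, u a ∈ M ↔ a ∈ M) ∧ MapsTo u S T := by
  obtain ⟨u, hu, huM, hue⟩ := hU.exists_extend hS hT (Classical.choice (Cardinal.eq.mp hST)) hc
  exact ⟨u, hu, huM, fun a ha => (hue ⟨a, ha⟩).symm ▸ (Subtype.prop _)⟩

theorem exists_fix (hU : IsFull U M) :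
    ∃ u ∈ U, (∀ a, u a ∈ M ↔ a ∈ M) ∧ ∀ a ∈ M, u a = a := by
  obtain ⟨u, hu, huM, hue⟩ := hU.exists_extend subset_rfl subset_rfl (Equiv.refl M) rfl
  exact ⟨u, hu, huM, fun a ha => hue ⟨a, ha⟩⟩

theorem exists_eq_mul_mul_inv (hU : IsFull U M) {f h : Perm Ω} (hf : ∀ a ∉ M, f a = a)
    (hh : ∀ a ∉ M, h a = a)
    (hfh : PermConj (h.subtypePerm (apply_mem_iff_of_forall_notMem hh))
      (f.subtypePerm (apply_mem_iff_of_forall_notMem hf))) :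
    ∃ u ∈ U, f = u * h * u⁻¹ := by
  obtain ⟨τ, hτ⟩ := hfh
  obtain ⟨u, hu, huM, huτ⟩ := hU.exists_extend subset_rfl subset_rfl τ rfl
  refine ⟨u, hu, eq_mul_inv_of_mul_eq (Equiv.ext fun a => ?_)⟩
  simp only [Perm.mul_apply]
  by_cases ha : a ∈ M
  · rw [huτ ⟨a, ha⟩, huτ ⟨h a, (apply_mem_iff_of_forall_notMem hh a).mpr ha⟩]
    exact congrArg Subtype.val (hτ ⟨a, ha⟩).symm
  · rw [hh a ha, hf _ ((not_congr (huM a)).mpr ha)]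

theorem exists_inv_mul_eqOn (hU : IsFull U M) {q ρ : Perm Ω} {Z : Set Ω} (hZ : Z ⊆ M)
    (hρZ : ρ '' Z = Z) (hqZ : q '' Z ⊆ M) (hc : #(M \ Z : Set Ω) = #(M \ q '' Z : Set Ω)) :
    ∃ u ∈ U, EqOn ⇑(u⁻¹ * q) ρ Z := by
  have hqρZ : ⇑(q * ρ⁻¹) '' Z = q '' Z := by
    rw [Perm.coe_mul, image_comp, Perm.coe_inv]
    conv_lhs => rw [← hρZ, symm_image_image]
  obtain ⟨u, hu, -, hue⟩ := hU.exists_extend hZ (hqρZ ▸ hqZ)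
    (Equiv.Set.image _ Z (q * ρ⁻¹).injective) (hqρZ ▸ hc)
  refine ⟨u, hu, fun a ha => ?_⟩
  have := hue ⟨ρ a, hρZ ▸ mem_image_of_mem ρ ha⟩
  simp only [Equiv.Set.image_apply, Perm.mul_apply, Perm.coe_inv, symm_apply_apply] at this
  simp [← this]

theorem conj (hU : IsFull U M) (x : Perm Ω) : IsFull ({x} * U * {x⁻¹}) (x '' M) := by
  intro σ
  let e := Equiv.Set.image x M x.injective
  obtain ⟨u, hu, huM, huσ⟩ := hU (e.permCongr.symm σ)
  refine ⟨x * u * x⁻¹, mul_mem_mul (mul_mem_mul rfl hu) rfl, ?_, ?_⟩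
  · simp only [image_image, Perm.mul_apply, Perm.coe_inv, symm_apply_apply]
    rw [← image_image (g := x), huM]
  · rintro ⟨_, a, ha, rfl⟩
    simp only [Perm.mul_apply, Perm.coe_inv, symm_apply_apply]
    rw [show u a = u (⟨a, ha⟩ : M) from rfl, huσ ⟨a, ha⟩]
    exact congrArg Subtype.val (e.apply_symm_apply _)

end IsFull

namespace FullMoiety

section Words

variable {Ω : Type u} [Infinite Ω] {M₁ M₂ : Set Ω} {U V : Set (Perm Ω)}

theorem exists_fix_compl_isFullPerm (hcover : M₁ ∪ M₂ = Set.univ) (hU : IsFull U M₁)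
    (hinter : #(M₁ ∩ M₂ : Set Ω) = #Ω) :
    ∃ u ∈ U, ∃ hu : ∀ a ∉ M₂, u a = a,
      IsFullPerm Ω (u.subtypePerm (apply_mem_iff_of_forall_notMem hu)) := by
  classical
  obtain ⟨s, hs⟩ := exists_isFullPerm (X := ↥(M₁ ∩ M₂)) (aleph0_le_mk Ω) hinter
  have hp : ∀ a ∉ M₁, Perm.ofSubtype s a = a := fun a ha =>
    Perm.ofSubtype_apply_of_not_mem s fun h => ha h.1
  obtain ⟨u, hu, -, hup⟩ := hU.exists_extend subset_rfl subset_rfl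
    ((Perm.ofSubtype s).subtypePerm (apply_mem_iff_of_forall_notMem hp)) rfl
  have hfix : ∀ a ∉ M₂, u a = a := fun a ha => by
    rw [hup ⟨a, compl_subset_of_union_eq_univ hcover ha⟩]
    exact Perm.ofSubtype_apply_of_not_mem s fun h => ha h.2
  refine ⟨u, hu, hfix, IsFullPerm.subtypePerm_of_extends inter_subset_right _ hs (fun a => ?_)
    (aleph0_le_mk Ω) (mk_set_le _)⟩
  rw [hup ⟨a, a.2.1⟩]
  exact Perm.ofSubtype_apply_coe s a

theorem exists_conj_fix_compl_isFullPerm (hcover : M₁ ∪ M₂ = Set.univ) (hU : IsFull U M₁)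
    (hcompl : #(M₂ᶜ : Set Ω) = #Ω) (hinter : #(M₁ ∩ M₂ : Set Ω) = #Ω)
    {Z₁ Z₂ : Set Ω} (hZ₁ : Z₁ ⊆ M₁ ∩ M₂) (hZ₁card : #Z₁ = #Ω) (hZ : Disjoint Z₁ Z₂)
    {s : Perm Z₂} (hs : IsFullPerm Ω s) {K : Perm Ω} (hKfix : ∀ a ∈ Z₁, K a = a)
    (hKs : ∀ a : Z₂, K a = s a) :
    ∃ u ∈ U, ∃ hL : ∀ a ∉ M₂, (u⁻¹ * K * u) a = a,
      IsFullPerm Ω ((u⁻¹ * K * u).subtypePerm (apply_mem_iff_of_forall_notMem hL)) := by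
  have hM₂c := compl_subset_of_union_eq_univ hcover
  obtain ⟨u, hu, -, huZ₁⟩ := hU.exists_mapsTo hM₂c (hZ₁.trans inter_subset_left)
    (hcompl.trans hZ₁card.symm) (by
      rw [sdiff_compl, hinter]
      exact (mk_eq_of_subset (S := M₁ \ Z₁)
        (fun a ha => ⟨hM₂c ha, fun hz => ha (hZ₁ hz).2⟩) hcompl).symm)
  have hL : ∀ a ∉ M₂, (u⁻¹ * K * u) a = a := fun a ha => by
    simp [hKfix _ (huZ₁ ha)]
  refine ⟨u, hu, hL, ?_⟩
  let e := Equiv.Set.image (⇑u⁻¹) Z₂ u⁻¹.injective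
  refine IsFullPerm.subtypePerm_of_extends (S := ⇑u⁻¹ '' Z₂) (s := e.permCongr s) ?_ _
    (hs.of_permConj ⟨e.symm, fun a => by simp [permCongr_apply]⟩) ?_ (aleph0_le_mk Ω)
    (mk_set_le _)
  · rintro _ ⟨z, hz, rfl⟩
    by_contra h
    have := huZ₁ h
    simp only [Perm.coe_inv, apply_symm_apply] at this
    exact hZ.le_bot ⟨this, hz⟩
  · rintro ⟨_, z, hz, rfl⟩
    have he : (⟨u⁻¹ z, z, hz, rfl⟩ : ↥(⇑u⁻¹ '' Z₂)) = e ⟨z, hz⟩ := rfl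
    rw [he, permCongr_apply, symm_apply_apply]
    simp [e, ← hKs ⟨z, hz⟩]

theorem mem_UVUVU (hcover : M₁ ∪ M₂ = Set.univ) (hU : IsFull U M₁) (hV : IsFull V M₂)
    (hUinv : U⁻¹ = U) (hVinv : V⁻¹ = V) (hcompl : #(M₂ᶜ : Set Ω) = #Ω)
    (hinter : #(M₁ ∩ M₂ : Set Ω) = #Ω)
    {Z₁ Z₂ : Set Ω} (hZ₁ : Z₁ ⊆ M₁ ∩ M₂) (hZ₁card : #Z₁ = #Ω) (hZ : Disjoint Z₁ Z₂)
    {s : Perm Z₂} (hs : IsFullPerm Ω s) {K : Perm Ω} (hKfix : ∀ a ∈ Z₁, K a = a)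
    (hKs : ∀ a : Z₂, K a = s a) :
    K ∈ U * V * U * V * U := by
  obtain ⟨u₂, hu₂, hL, hLfull⟩ :=
    exists_conj_fix_compl_isFullPerm hcover hU hcompl hinter hZ₁ hZ₁card hZ hs hKfix hKs
  obtain ⟨u₄, hu₄, hfix, hu₄full⟩ := exists_fix_compl_isFullPerm hcover hU hinter
  obtain ⟨v₃, hv₃, hLv₃⟩ := hV.exists_eq_mul_mul_inv hL hfix (hu₄full.permConj hLfull)
  have hK : K = u₂ * v₃ * u₄ * v₃⁻¹ * u₂⁻¹ := by
    calc K = u₂ * (u₂⁻¹ * K * u₂) * u₂⁻¹ := by group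
      _ = u₂ * v₃ * u₄ * v₃⁻¹ * u₂⁻¹ := by rw [hLv₃]; group
  rw [hK]
  exact mul_mem_mul (mul_mem_mul (mul_mem_mul (mul_mem_mul hu₂ hv₃) hu₄)
    (inv_mem_of_inv_eq hVinv hv₃)) (inv_mem_of_inv_eq hUinv hu₂)

theorem mem_VUVUVU_of_mapsTo (hcover : M₁ ∪ M₂ = Set.univ) (hU : IsFull U M₁)
    (hV : IsFull V M₂) (hUinv : U⁻¹ = U) (hVinv : V⁻¹ = V) (hcompl : #(M₂ᶜ : Set Ω) = #Ω)
    (hinter : #(M₁ ∩ M₂ : Set Ω) = #Ω) {q : Perm Ω} (hq : MapsTo q (M₁ ∩ M₂) M₂) :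
    q ∈ V * U * V * U * V * U := by
  classical
  have hΩ := aleph0_le_mk Ω
  obtain ⟨Z₁, hZ₁C, hZ₁, hCZ₁⟩ := exists_subset_mk_eq_mk_diff (M₁ ∩ M₂) (hinter ▸ hΩ)
  obtain ⟨Z₂, hZ₂CZ₁, hZ₂, hR⟩ := exists_subset_mk_eq_mk_diff _ ((hCZ₁.trans hinter).symm ▸ hΩ)
  rw [hCZ₁, hinter] at hZ₂ hR
  rw [hinter] at hZ₁
  obtain ⟨s, hs⟩ := exists_isFullPerm hΩ hZ₂
  set ρ := Perm.ofSubtype s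
  set Z := Z₁ ∪ Z₂
  have hZC : Z ⊆ M₁ ∩ M₂ := union_subset hZ₁C fun a ha => (hZ₂CZ₁ ha).1
  have hρZ : ρ '' Z = Z := image_perm fun a ha => by_contra fun h =>
    ha (Perm.ofSubtype_apply_of_not_mem s fun h' => h (Or.inr h'))
  set R := ((M₁ ∩ M₂) \ Z₁) \ Z₂
  obtain ⟨v, hv, hK⟩ := hV.exists_inv_mul_eqOn (hZC.trans inter_subset_right) hρZ
    (hq.mono_left hZC).image_subset (by
      rw [mk_eq_of_subset (S := M₂ \ Z) (T := R)
        (fun a ha => ⟨ha.1.1.2, fun h => h.elim ha.1.2 ha.2⟩) hR]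
      refine (mk_eq_of_subset (T := q '' R) ?_ ((mk_image_eq q.injective).trans hR)).symm
      rintro _ ⟨r, hr, rfl⟩
      refine ⟨hq hr.1.1, fun ⟨z, hz, hzr⟩ => ?_⟩
      rw [q.injective hzr] at hz
      exact hz.elim hr.1.2 hr.2)
  have hZ₁Z₂ : Disjoint Z₁ Z₂ := disjoint_left.mpr fun a ha h => (hZ₂CZ₁ h).2 ha
  have hvq := mem_UVUVU hcover hU hV hUinv hVinv hcompl hinter hZ₁C hZ₁ hZ₁Z₂ hs
    (K := v⁻¹ * q) (fun a ha => (hK (Or.inl ha)).trans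
      (Perm.ofSubtype_apply_of_not_mem s (disjoint_left.mp hZ₁Z₂ ha)))
    (fun a => (hK (Or.inr a.2)).trans (Perm.ofSubtype_apply_coe s a))
  have : q = v * (v⁻¹ * q) := by group
  rw [this]
  simpa only [mul_assoc] using mul_mem_mul hv hvq

theorem mem_VUVUVUVUU (hcover : M₁ ∪ M₂ = Set.univ) (hU : IsFull U M₁) (hV : IsFull V M₂)
    (hUinv : U⁻¹ = U) (hVinv : V⁻¹ = V) (hcompl : #(M₂ᶜ : Set Ω) = #Ω)
    (hinter : #(M₁ ∩ M₂ : Set Ω) = #Ω) {g : Perm Ω} (hg : #(M₁ ∩ g ⁻¹' M₂ : Set Ω) = #Ω) :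
    g ∈ V * U * V * U * V * U * V * U * U := by
  have hM₂c := compl_subset_of_union_eq_univ hcover
  obtain ⟨T, hTM₂c, hT⟩ :=
    le_mk_iff_exists_subset.mp ((mk_set_le (M₁ \ g ⁻¹' M₂)).trans_eq hcompl.symm)
  obtain ⟨u₈, hu₈, hu₈M, hu₈E⟩ := hU.exists_mapsTo sdiff_subset (hTM₂c.trans hM₂c) hT.symm (by
    rw [sdiff_sdiff_right_self, hg]
    exact (mk_eq_of_subset (S := M₁ \ T) (fun a ha => ⟨ha.1, fun h => hTM₂c h ha.2⟩) hinter).symm)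
  obtain ⟨u₉, hu₉, hu₉M, hu₉fix⟩ := hU.exists_fix
  obtain ⟨v₇, hv₇, hv₇M, hv₇fix⟩ := hV.exists_fix
  -- `u₈` pushes `M₁ \ g⁻¹ M₂` out of `M₂`; `u₉` and `v₇` only pad the word
  have hP : MapsTo (g * (v₇ * u₈ * u₉)⁻¹) (M₁ ∩ M₂) M₂ := by
    intro c hc
    set y := (v₇ * u₈ * u₉)⁻¹ c
    have hy : v₇ (u₈ (u₉ y)) = c := (v₇ * u₈ * u₉).apply_symm_apply c
    by_contra hgy
    by_cases hyM : y ∈ M₁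
    · rw [hu₉fix y hyM] at hy
      exact (hv₇M _).not.mpr (hTM₂c (hu₈E ⟨hyM, hgy⟩)) (hy ▸ hc.2)
    · have h₁ : u₈ (u₉ y) ∉ M₁ := by rwa [hu₈M, hu₉M]
      rw [hv₇fix _ ((eq_univ_iff_forall.mp hcover _).resolve_left h₁)] at hy
      exact h₁ (hy ▸ hc.1)
  have hg' : g = g * (v₇ * u₈ * u₉)⁻¹ * v₇ * u₈ * u₉ := by group
  rw [hg']
  exact mul_mem_mul (mul_mem_mul (mul_mem_mul
    (mem_VUVUVU_of_mapsTo hcover hU hV hUinv hVinv hcompl hinter hP) hv₇) hu₈) hu₉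

theorem mk_inter_preimage_eq_or (hcover : M₁ ∪ M₂ = Set.univ)
    (hinter : #(M₁ ∩ M₂ : Set Ω) = #Ω) (g : Perm Ω) :
    #(M₁ ∩ g ⁻¹' M₂ : Set Ω) = #Ω ∨ #(M₂ ∩ g ⁻¹' M₁ : Set Ω) = #Ω := by
  by_contra! h
  have hsub : g ⁻¹' (M₁ ∩ M₂) ⊆ (M₁ ∩ g ⁻¹' M₂) ∪ (M₂ ∩ g ⁻¹' M₁) := fun a ha =>
    (eq_univ_iff_forall.mp hcover a).imp (fun h₁ => ⟨h₁, ha.2⟩) (fun h₂ => ⟨h₂, ha.1⟩)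
  have := (mk_le_mk_of_subset hsub).trans (mk_union_le _ _)
  rw [mk_preimage_equiv, hinter] at this
  exact this.not_gt (add_lt_of_lt (aleph0_le_mk Ω) ((mk_set_le _).lt_of_ne h.1)
    ((mk_set_le _).lt_of_ne h.2))

end Words

theorem exists_involution_of_isMoiety {Ω : Type u} [Infinite Ω] {A : Set Ω} (hA : IsMoiety A) :
    ∃ x : Perm Ω, x * x = 1 ∧ x ≠ 1 ∧ A ∪ x '' A = Set.univ ∧ #(A ∩ x '' A : Set Ω) = #Ω := by
  obtain ⟨A₀, hA₀A, hA₀, hAA₀⟩ := exists_subset_mk_eq_mk_diff A (hA.1 ▸ aleph0_le_mk Ω)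
  rw [hA.1] at hA₀ hAA₀
  obtain ⟨e⟩ := Cardinal.eq.mp (hA₀.trans hA.2.symm)
  obtain ⟨x, hxx, hxe, hxfix⟩ :=
    exists_involution_of_equiv (disjoint_compl_right.mono_left hA₀A) e
  refine ⟨x, hxx, fun h1 => ?_, eq_univ_of_forall fun b => (em (b ∈ A)).imp_right fun hb =>
    ⟨e.symm ⟨b, hb⟩, hA₀A (e.symm _).2, by rw [hxe, apply_symm_apply]⟩,
    mk_eq_of_subset (fun a ha => ⟨ha.1, a, ha.1, hxfix a fun h => h.elim ha.2 (· ha.1)⟩) hAA₀⟩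
  obtain ⟨a⟩ : Nonempty A₀ := mk_ne_zero_iff.mp (hA₀ ▸ mk_ne_zero Ω)
  have hxa := hxe a
  rw [h1, Perm.one_apply] at hxa
  exact (e a).2 (hxa ▸ hA₀A a.2)

end FullMoiety

open FullMoiety

theorem stmt2 {Ω : Type*} [Infinite Ω] (U : Set (Equiv.Perm Ω)) (hU : U⁻¹ = U)
    (A : Set Ω) (hA : IsMoiety A) (hfull : IsFull U A) :
    ∃ x : Equiv.Perm Ω, orderOf x = 2 ∧
      (U * {x}) ^ 7 * U ^ 2 * {x} ∪ ({x} * U) ^ 7 * {x} * U ^ 2 = Set.univ := by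
  obtain ⟨x, hxx, hx1, hcover, hinter⟩ := exists_involution_of_isMoiety hA
  have hxinv : x⁻¹ = x := inv_eq_of_mul_eq_one_right hxx
  set V : Set (Perm Ω) := {x} * U * {x}
  have hV : IsFull V (x '' A) := by simpa only [hxinv] using hfull.conj x
  have hVinv : V⁻¹ = V := by simp only [V, mul_inv_rev, inv_singleton, hxinv, hU, mul_assoc]
  have hxA : #((x '' A)ᶜ : Set Ω) = #Ω := by
    rw [← image_compl_eq x.bijective, mk_image_eq x.injective, hA.2]
  refine ⟨x, orderOf_eq_prime (by rw [sq, hxx]) hx1, eq_univ_of_forall fun g => ?_⟩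
  rcases mk_inter_preimage_eq_or hcover hinter g with hg | hg
  · right
    rw [← pow_seven_word_eq]
    exact mem_VUVUVUVUU hcover hfull hV hU hVinv hxA hinter hg
  · left
    rw [← pow_seven_word_eq_of_mul_self_eq_one
      (by rw [singleton_mul_singleton, hxx, singleton_one])]
    exact mem_VUVUVUVUU (union_comm A _ ▸ hcover) hV hfull hVinv hU hA.2
      (inter_comm A _ ▸ hinter) hg
end

section
/- Let Ω be an infinite set and (U_i)_{i∈I} a family of subsets of Sym(Ω) with ⋃_{i∈I} U_i = Sym(Ω) and |I| ≤ |Ω|. Then Ω contains a moiety that is full with respect to at least one U_i. -/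
private def fiber {Ω J : Type*} (e : Ω ≃ J × Ω) (j : J) : Set Ω := {x | (e x).1 = j}

private theorem mem_fiber {Ω J : Type*} (e : Ω ≃ J × Ω) (j : J) (x : Ω) :
    x ∈ fiber e j ↔ (e x).1 = j := Iff.rfl

private def fiberEquiv {Ω J : Type*} (e : Ω ≃ J × Ω) (j : J) : ↥(fiber e j) ≃ Ω where
  toFun x := (e x.1).2
  invFun y := ⟨e.symm (j, y), by simp [fiber]⟩
  left_inv x := by
    obtain ⟨x, hx⟩ := x
    apply Subtype.ext
    have hx' : (e x).1 = j := hx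
    show e.symm (j, (e x).2) = x
    rw [← hx']
    simp
  right_inv y := by simp [fiber]

theorem stmt3 {Ω : Type u} [Infinite Ω] {I : Type u} (U : I → Set (Equiv.Perm Ω))
    (hcard : Cardinal.mk I ≤ Cardinal.mk Ω)
    (hcover : (⋃ i, U i) = Set.univ) :
    ∃ i : I, ∃ A : Set Ω, IsMoiety A ∧ IsFull (U i) A := by
  by_contra hcon
  push_neg at hcon
  have hΩ := Cardinal.aleph0_le_mk Ω
  have hJ : Cardinal.mk (I ⊕ PUnit.{u+1}) ≤ Cardinal.mk Ω := by
    rw [Cardinal.mk_sum, Cardinal.lift_id, Cardinal.lift_id, Cardinal.mk_punit]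
    calc Cardinal.mk I + 1 ≤ Cardinal.mk Ω + Cardinal.mk Ω :=
          add_le_add hcard (le_trans Cardinal.one_le_aleph0 hΩ)
      _ = Cardinal.mk Ω := Cardinal.add_eq_self hΩ
  obtain ⟨e⟩ : Nonempty (Ω ≃ (I ⊕ PUnit.{u+1}) × Ω) := by
    rw [← Cardinal.eq, Cardinal.mk_prod, Cardinal.lift_id, Cardinal.lift_id]
    exact (Cardinal.mul_eq_right hΩ hJ (Cardinal.mk_ne_zero _)).symm
  have hmoiety : ∀ i : I, IsMoiety (fiber e (Sum.inl i)) := by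
    intro i
    refine ⟨Cardinal.mk_congr (fiberEquiv e (Sum.inl i)), ?_⟩
    refine le_antisymm (Cardinal.mk_set_le _) ?_
    have hinj : Function.Injective
        (fun y : Ω => (⟨e.symm (Sum.inr PUnit.unit, y), by simp [fiber]⟩ :
          ↥((fiber e (Sum.inl i))ᶜ))) := by
      intro a b hab
      have := congrArg (fun z : ↥((fiber e (Sum.inl i))ᶜ) => (e z.1).2) hab
      simpa using this
    exact Cardinal.mk_le_of_injective hinj
  have key : ∀ i : I, ∃ σ : Equiv.Perm (fiber e (Sum.inl i)),
      ∀ f ∈ U i, ¬ ((f : Equiv.Perm Ω) '' (fiber e (Sum.inl i)) = fiber e (Sum.inl i) ∧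
        ∀ a : (fiber e (Sum.inl i)), f a = (σ a : Ω)) := by
    intro i
    have h1 := hcon i (fiber e (Sum.inl i)) (hmoiety i)
    simp only [IsFull] at h1
    obtain ⟨σ, hσ⟩ := not_forall.mp h1
    exact ⟨σ, fun f hf hcond => hσ ⟨f, hf, hcond⟩⟩
  choose σ hσ using key
  let τ : (I ⊕ PUnit.{u+1}) → Equiv.Perm Ω := fun j =>
    Sum.rec (fun i => Equiv.permCongr (fiberEquiv e (Sum.inl i)) (σ i)) (fun _ => 1) j
  let g : Equiv.Perm Ω := (e.trans (Equiv.prodCongrRight τ)).trans e.symm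
  have hg1 : ∀ x, e (g x) = Equiv.prodCongrRight τ (e x) := fun x => e.apply_symm_apply _
  have hfst : ∀ x, (e (g x)).1 = (e x).1 := fun x => by rw [hg1]; rfl
  have hga : ∀ (i : I) (a : ↥(fiber e (Sum.inl i))), g ↑a = ((σ i) a : Ω) := by
    intro i a
    apply e.injective
    rw [hg1]
    have ha : (e (a : Ω)).1 = Sum.inl i := a.2
    have h4 : Equiv.prodCongrRight τ (e (a : Ω)) = ((e (a : Ω)).1, τ (e (a : Ω)).1 (e (a : Ω)).2) := rfl
    rw [h4, ha]
    have h5 : τ (Sum.inl i) (e (a : Ω)).2 = (e ((σ i a : Ω))).2 := by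
      show Equiv.permCongr (fiberEquiv e (Sum.inl i)) (σ i) (e (a : Ω)).2 = _
      rw [Equiv.permCongr_apply]
      have h6 : (e (a : Ω)).2 = fiberEquiv e (Sum.inl i) a := rfl
      rw [h6, Equiv.symm_apply_apply]
      rfl
    rw [h5]
    have h7 : (e ((σ i a : Ω))).1 = Sum.inl i := (σ i a).2
    exact Prod.ext h7.symm rfl
  have himg : ∀ i : I, (g : Equiv.Perm Ω) '' (fiber e (Sum.inl i)) = fiber e (Sum.inl i) := by
    intro i
    ext y
    constructor
    · rintro ⟨x, hx, rfl⟩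
      show (e (g x)).1 = Sum.inl i
      rw [hfst]; exact hx
    · intro hy
      refine ⟨g.symm y, ?_, g.apply_symm_apply y⟩
      show (e (g.symm y)).1 = Sum.inl i
      have h8 := hfst (g.symm y)
      rw [g.apply_symm_apply] at h8
      rw [← h8]; exact hy
  have hgU : g ∈ ⋃ i, U i := by rw [hcover]; trivial
  obtain ⟨i₀, hgi⟩ := Set.mem_iUnion.mp hgU
  exact hσ i₀ g hgi ⟨himg i₀, fun a => hga i₀ a⟩
end

section
/- If Ω is an infinite set and (G_i)_{i∈I} is a chain of subgroups of Sym(Ω) with ⋃_{i∈I} G_i = Sym(Ω) and |I| ≤ |Ω|, then G_i = Sym(Ω) for some i ∈ I. -/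
/-!
Transport the chain to `Sym X` for `X = Option I × ℤ × Ω`, a set of cardinality `|Ω|` made of
fibres `{o} × ℤ × Ω`. Let `π i` swap the fibres over `none` and `some i`, and let `mirror i u`
act by `u` on the fibre over `none`, by `u⁻¹` on the fibre over `some i`, and trivially elsewhere.

If for every `i` and every index `e` some `mirror i u` escapes `G e`, choose `e i` with `G i` and
`π i` inside `G (e i)` and such a witness `z i`. The permutation `h` acting by `z i` on the fibre
over `some i` lies in some `G j`, and then `⁅π j, h⁆ = mirror j (z j) ∈ G (e j)`: contradiction.

So some `G e` contains every `mirror i u`, hence every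
`mirror i a * mirror i b * (mirror i (b * a))⁻¹`, which acts by `⁅a, b⁆` on the fibre over `none`
only. A swindle along `ℤ` makes every permutation of `{0} × Ω` a commutator, so `G e` contains the
pointwise stabiliser of the complement of `Λ = {none} × {0} × Ω`. Since `Λ` and its complement
both have cardinality `|X|`, two conjugates of this subgroup inside a common `G k` are the
pointwise stabilisers of two parts of a partition of `X` into three parts of full cardinality,
and these two stabilisers generate `Sym X`.
-/

open Cardinal MulAction Equiv Set
open scoped commutatorElement

universe u

section Cardinal

variable {X : Type u}

theorem Cardinal.mk_preimage_subtype_val (S t : Set X) :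
    #(Subtype.val ⁻¹' t : Set S) = #(S ∩ t : Set X) := by
  rw [← Subtype.image_preimage_coe, mk_image_eq Subtype.val_injective]

theorem Cardinal.mk_eq_of_subset_of_mk_eq {s t : Set X} (hts : t ⊆ s) (ht : #t = #X) :
    #s = #X :=
  le_antisymm (mk_set_le s) (ht ▸ mk_le_mk_of_subset hts)

theorem Cardinal.exists_mk_preimage_singleton_eq {α : Type} [Infinite X] [Finite α]
    (f : X → α) : ∃ a, #(f ⁻¹' {a}) = #X := by
  obtain ⟨⟨a⟩, ha⟩ := infinite_pigeonhole (ULift.up.{u} ∘ f) (aleph0_le_mk X)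
    ((lt_aleph0_of_finite _).trans_le (Ordinal.aleph0_le_cof_iff.mpr
      (Ordinal.one_lt_cof_iff.mpr (isSuccLimit_ord (aleph0_le_mk X)))))
  rw [preimage_comp, ← image_singleton, ULift.up_injective.preimage_image] at ha
  exact ⟨a, ha⟩

theorem Cardinal.exists_fin_mk_preimage_singleton_eq (X : Type u) [Infinite X] {n : ℕ}
    (hn : n ≠ 0) : ∃ c : X → Fin n, ∀ k, #(c ⁻¹' {k}) = #X := by
  obtain ⟨E⟩ : Nonempty (X ≃ Fin n × X) := Cardinal.eq.mp <| by
    rw [mk_prod, mk_fin, lift_natCast, lift_uzero]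
    exact (mul_eq_right (aleph0_le_mk X) ((natCast_lt_aleph0 (n := n)).le.trans (aleph0_le_mk X))
      (Nat.cast_ne_zero.mpr hn)).symm
  refine ⟨Prod.fst ∘ E, fun k => ?_⟩
  rw [preimage_comp, mk_preimage_equiv, preimage_fst_singleton_eq_range,
    mk_range_eq _ (Prod.mk_right_injective k)]

theorem Cardinal.mk_option_prod_int_prod {I Ω : Type u} [Infinite Ω] (h : #I ≤ #Ω) :
    #(Option I × ℤ × Ω) = #Ω := by
  have hΩ := aleph0_le_mk Ω
  rw [mk_prod, mk_prod, mk_int, lift_id, lift_uzero, lift_aleph0, lift_id, aleph0_mul_eq hΩ]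
  refine mul_eq_right hΩ ?_ (mk_ne_zero _)
  rw [mk_option]
  exact add_le_of_le hΩ h (one_le_aleph0.trans hΩ)

end Cardinal

namespace Equiv.Perm

section FixingSubgroup

variable {X : Type u}

theorem mem_iff_of_mem_fixingSubgroup_compl {s : Set X} {g : Perm X}
    (hg : g ∈ fixingSubgroup (Perm X) sᶜ) (x : X) : g x ∈ s ↔ x ∈ s := by
  rw [mem_fixingSubgroup_iff] at hg
  refine ⟨fun hgx => ?_, fun hx => ?_⟩
  · by_contra hx
    exact hx (hg x hx ▸ hgx)
  · by_contra hgx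
    rw [g.injective (hg _ hgx)] at hgx
    exact hgx hx

theorem exists_preimage_eq {P Q : Set X} (h : #P = #Q) (hc : #(Pᶜ : Set X) = #(Qᶜ : Set X)) :
    ∃ g : Perm X, g ⁻¹' Q = P := by
  classical
  obtain ⟨e⟩ := Cardinal.eq.mp h
  obtain ⟨e'⟩ := Cardinal.eq.mp hc
  refine ⟨Equiv.subtypeCongr e e', Set.ext fun x => ?_⟩
  by_cases hx : x ∈ P
  · simp [Equiv.subtypeCongr, Equiv.sumCompl, hx]
  · simpa [Equiv.subtypeCongr, Equiv.sumCompl, hx, -Subtype.coe_prop] using (e' ⟨x, hx⟩).2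

theorem exists_mem_fixingSubgroup_compl_preimage_eq {S P Q : Set X} (hP : P ⊆ S) (hQ : Q ⊆ S)
    (h : #P = #Q) (hd : #(S \ P : Set X) = #(S \ Q : Set X)) :
    ∃ g ∈ fixingSubgroup (Perm X) Sᶜ, g ⁻¹' Q = P := by
  classical
  obtain ⟨g, hg⟩ := exists_preimage_eq (P := Subtype.val ⁻¹' P) (Q := Subtype.val ⁻¹' Q)
    (by rwa [mk_preimage_subtype_val, mk_preimage_subtype_val, inter_eq_right.mpr hP,
      inter_eq_right.mpr hQ])
    (by rwa [← preimage_compl, ← preimage_compl, mk_preimage_subtype_val,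
      mk_preimage_subtype_val, ← sdiff_eq, ← sdiff_eq])
  refine ⟨ofSubtype g, (mem_fixingSubgroup_iff _).mpr fun x hx => ofSubtype_apply_of_not_mem g hx,
    Set.ext fun x => ?_⟩
  by_cases hx : x ∈ S
  · rw [mem_preimage, ofSubtype_apply_of_mem g hx]
    exact Set.ext_iff.mp hg ⟨x, hx⟩
  · rw [mem_preimage, ofSubtype_apply_of_not_mem g hx]
    exact ⟨fun h => absurd (hQ h) hx, fun h => absurd (hP h) hx⟩

theorem mem_of_preimage_eq_self {S T : Set X} {K : Subgroup (Perm X)}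
    (hST : _root_.Disjoint S T) (hS : fixingSubgroup (Perm X) S ≤ K)
    (hT : fixingSubgroup (Perm X) T ≤ K) {w : Perm X} (hw : w ⁻¹' S = S) : w ∈ K := by
  classical
  have hwS : ∀ x, w x ∈ S ↔ x ∈ S := fun x => Set.ext_iff.mp hw x
  set c := ofSubtype (w.subtypePerm hwS)
  have hcT : c ∈ K := hT <| (mem_fixingSubgroup_iff _).mpr fun x hx =>
    ofSubtype_subtypePerm_of_not_mem hwS (disjoint_right.mp hST hx)
  have hcw : c⁻¹ * w ∈ K := hS <| (mem_fixingSubgroup_iff _).mpr fun x hx => by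
    rw [Perm.smul_def, Perm.mul_apply, inv_eq_iff_eq, ofSubtype_subtypePerm_of_mem hwS hx]
  simpa using K.mul_mem hcT hcw

theorem fixingSubgroup_le_of_preimage_eq {S T : Set X} {K : Subgroup (Perm X)} {q : Perm X}
    (hq : q ⁻¹' T = S) (hS : fixingSubgroup (Perm X) S ≤ K) (hqK : q ∈ K) :
    fixingSubgroup (Perm X) T ≤ K := by
  intro g hg
  have hconj : q⁻¹ * g * q ∈ K := hS <| (mem_fixingSubgroup_iff _).mpr fun x hx => by
    have : q x ∈ T := by rw [← hq] at hx; exact hx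
    rw [Perm.smul_def, Perm.mul_apply, Perm.mul_apply, inv_eq_iff_eq,
      show g (q x) = q x from (mem_fixingSubgroup_iff _).mp hg _ this]
  simpa [mul_assoc] using K.mul_mem (K.mul_mem hqK hconj) (K.inv_mem hqK)

theorem exists_mem_fixingSubgroup_fiber_preimage_fiber_eq {ι : Type*} {c : X → ι}
    (hc : ∀ k, #(c ⁻¹' {k}) = #X) {j k l : ι} (hjl : j ≠ l) (hkl : k ≠ l) (hjk : j ≠ k)
    {Y : Set X} (hY : Y ⊆ c ⁻¹' {j}) (hYc : #Y = #X) :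
    ∃ g ∈ fixingSubgroup (Perm X) (c ⁻¹' {l}), g ⁻¹' (c ⁻¹' {k}) = Y := by
  have hfib : ∀ {m n : ι}, m ≠ n → c ⁻¹' {m} ⊆ (c ⁻¹' {n})ᶜ :=
    fun hmn _ hx hx' => hmn (hx.symm.trans hx')
  have hkY : c ⁻¹' {k} ⊆ (c ⁻¹' {l})ᶜ \ Y :=
    fun _ hx => ⟨hfib hkl hx, fun hxY => hjk ((hY hxY).symm.trans hx)⟩
  have hjk' : c ⁻¹' {j} ⊆ (c ⁻¹' {l})ᶜ \ c ⁻¹' {k} := fun _ hx => ⟨hfib hjl hx, hfib hjk hx⟩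
  simpa using exists_mem_fixingSubgroup_compl_preimage_eq (hY.trans (hfib hjl)) (hfib hkl)
    (hYc.trans (hc k).symm)
    ((mk_eq_of_subset_of_mk_eq hkY (hc k)).trans (mk_eq_of_subset_of_mk_eq hjk' (hc j)).symm)

variable {K : Subgroup (Perm X)} {c : X → Fin 3}

theorem exists_mem_preimage_fiber_zero_eq (hc : ∀ k, #(c ⁻¹' {k}) = #X)
    (h0 : fixingSubgroup (Perm X) (c ⁻¹' {0}) ≤ K) (h2 : fixingSubgroup (Perm X) (c ⁻¹' {2}) ≤ K)
    {j : Fin 3} {Y : Set X} (hY : Y ⊆ c ⁻¹' {j}) (hYc : #Y = #X) :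
    ∃ u ∈ K, u ⁻¹' (c ⁻¹' {0}) = Y := by
  have step : ∀ {j k l : Fin 3}, (j ≠ l ∧ k ≠ l ∧ j ≠ k) ∧ l ≠ 1 → ∀ {Y : Set X},
      Y ⊆ c ⁻¹' {j} → #Y = #X → ∃ g ∈ K, g ⁻¹' (c ⁻¹' {k}) = Y := by
    rintro j k l ⟨⟨hjl, hkl, hjk⟩, hl⟩ Y hY hYc
    obtain ⟨g, hg, hgY⟩ := exists_mem_fixingSubgroup_fiber_preimage_fiber_eq hc hjl hkl hjk hY hYc
    refine ⟨g, ?_, hgY⟩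
    fin_cases l
    exacts [h0 hg, absurd rfl hl, h2 hg]
  obtain ⟨g₁, hg₁, hg₁Y⟩ := step (j := 1) (k := 0) (l := 2) (by decide) subset_rfl (hc 1)
  fin_cases j
  · obtain ⟨g, hg, hgY⟩ := step (k := 1) (l := 2) (by decide) hY hYc
    exact ⟨g₁ * g, K.mul_mem hg₁ hg, by rw [coe_mul, preimage_comp, hg₁Y, hgY]⟩
  · exact step (l := 2) (by decide) hY hYc
  · obtain ⟨g, hg, hgY⟩ := step (k := 1) (l := 0) (by decide) hY hYc
    exact ⟨g₁ * g, K.mul_mem hg₁ hg, by rw [coe_mul, preimage_comp, hg₁Y, hgY]⟩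

/- A pigeonhole choice of `C` with `C` and `f '' C` inside fibres lets us correct `f` on both
sides into the setwise stabiliser of `c ⁻¹' {0}`. -/
theorem eq_top_of_fixingSubgroup_fiber_le [Infinite X] (hc : ∀ k, #(c ⁻¹' {k}) = #X)
    (h0 : fixingSubgroup (Perm X) (c ⁻¹' {0}) ≤ K)
    (h2 : fixingSubgroup (Perm X) (c ⁻¹' {2}) ≤ K) : K = ⊤ := by
  refine (Subgroup.eq_top_iff' K).mpr fun f => ?_
  obtain ⟨⟨j', j⟩, hC⟩ := exists_mk_preimage_singleton_eq fun x => (c x, c (f x))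
  set C := (fun x => (c x, c (f x))) ⁻¹' {(j', j)}
  obtain ⟨u₁, hu₁, hu₁C⟩ := exists_mem_preimage_fiber_zero_eq (j := j') (Y := C) hc h0 h2
    (fun x hx => congrArg Prod.fst hx) hC
  obtain ⟨u₂, hu₂, hu₂C⟩ := exists_mem_preimage_fiber_zero_eq (j := j) (Y := f '' C) hc h0 h2
    (by rintro _ ⟨x, hx, rfl⟩; exact congrArg Prod.snd hx) (by rwa [mk_image_eq f.injective])
  have hw : (u₂ * f * u₁⁻¹) ⁻¹' (c ⁻¹' {0}) = c ⁻¹' {0} := by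
    simp only [coe_mul, preimage_comp, hu₂C, f.injective.preimage_image, ← hu₁C]
    rw [← preimage_comp, ← coe_mul, mul_inv_cancel, coe_one, preimage_id]
  have hwK := mem_of_preimage_eq_self (Disjoint.preimage c (by simp)) h0 h2 hw
  simpa [mul_assoc] using K.mul_mem (K.mul_mem (K.inv_mem hu₂) hwK) hu₁

end FixingSubgroup

section Fiberwise

variable {α β : Type*}

def prodCongrRightHom : (α → Perm β) →* Perm (α × β) where
  toFun := prodCongrRight
  map_one' := by ext <;> simp
  map_mul' _ _ := by ext <;> simp

@[simp] theorem prodCongrRightHom_apply (F : α → Perm β) (x : α × β) :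
    prodCongrRightHom F x = (x.1, F x.1 x.2) := rfl

theorem prodExtendRight_eq_prodCongrRightHom [DecidableEq α] (a : α) (u : Perm β) :
    prodExtendRight a u = prodCongrRightHom (Pi.mulSingle a u) := by
  ext ⟨a', b⟩ <;> by_cases h : a' = a
  all_goals simp [h, prodExtendRight_apply_ne]

theorem commutatorElement_prodCongr_prodCongrRightHom (σ : Perm α) (F : α → Perm β) :
    ⁅(prodCongr σ (Equiv.refl β) : Perm (α × β)), prodCongrRightHom F⁆ =
      prodCongrRightHom fun a => F (σ.symm a) * (F a)⁻¹ := by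
  rw [commutatorElement_def, ← map_inv prodCongrRightHom F]
  ext ⟨a, b⟩ <;> simp [Perm.mul_apply, -map_inv]

theorem exists_prodExtendRight_eq [DecidableEq α] {a : α} {g : Perm (α × β)}
    (hg : ∀ x : α × β, x.1 ≠ a → g x = x) : ∃ u : Perm β, prodExtendRight a u = g := by
  have hgmem : g ∈ fixingSubgroup (Perm (α × β)) {x : α × β | x.1 = a}ᶜ :=
    (mem_fixingSubgroup_iff _).mpr hg
  have hfib : ∀ h ∈ fixingSubgroup (Perm (α × β)) {x : α × β | x.1 = a}ᶜ, ∀ b,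
      h (a, b) = (a, (h (a, b)).2) :=
    fun h hh b => Prod.ext ((mem_iff_of_mem_fixingSubgroup_compl hh (a, b)).mpr rfl) rfl
  refine ⟨⟨fun b => (g (a, b)).2, fun b => (g⁻¹ (a, b)).2, fun b => ?_, fun b => ?_⟩, ?_⟩
  · dsimp only
    rw [← hfib g hgmem]
    simp
  · dsimp only
    rw [← hfib g⁻¹ (inv_mem hgmem)]
    simp
  · ext ⟨a', b⟩ : 1
    by_cases h : a' = a
    · subst h
      rw [prodExtendRight_apply_eq]
      exact (hfib g hgmem b).symm
    · rw [prodExtendRight_apply_ne _ h, hg _ h]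

/- The shift by one moves the boundary of `{n < 0}` by one step, so the commutator is `u` exactly
on the level `0`. -/
theorem exists_commutatorElement_eq_prodExtendRight_zero (u : Perm β) :
    ∃ a b : Perm (ℤ × β), ⁅a, b⁆ = prodExtendRight 0 u := by
  refine ⟨prodCongr (Equiv.addRight (1 : ℤ)) (Equiv.refl β),
    prodCongrRightHom fun n => if n < 0 then u else 1, ?_⟩
  rw [commutatorElement_prodCongr_prodCongrRightHom, prodExtendRight_eq_prodCongrRightHom]
  congr 1
  funext n
  simp only [addRight_symm, coe_addRight, Pi.mulSingle_apply]
  split_ifs <;> first | omega | simp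

def mirror [DecidableEq α] (i : α) (u : Perm β) : Option α → Perm β :=
  Pi.mulSingle none u * Pi.mulSingle (some i) u⁻¹

theorem mirror_mul_mirror_mul_inv [DecidableEq α] (i : α) (a b : Perm β) :
    mirror i a * mirror i b * (mirror i (b * a))⁻¹ = Pi.mulSingle none ⁅a, b⁆ := by
  funext o
  rcases o with _ | j
  · simp [mirror, commutatorElement_def, mul_assoc]
  · by_cases h : j = i
    · subst h; simp [mirror]
    · simp [mirror, h]

theorem commutatorElement_swap_prodCongrRightHom_elim [DecidableEq α] (z : α → Perm β) (i : α) :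
    ⁅(prodCongr (swap none (some i)) (Equiv.refl β) : Perm (Option α × β)),
      prodCongrRightHom fun o => o.elim 1 z⁆ = prodCongrRightHom (mirror i (z i)) := by
  rw [commutatorElement_prodCongr_prodCongrRightHom]
  congr 1
  funext o
  rcases o with _ | j
  · simp [mirror]
  · by_cases h : j = i
    · subst h; simp [mirror]
    · simp [mirror, h, swap_apply_of_ne_of_ne]

theorem fixingSubgroup_compl_range_le_of_prodCongrRightHom_mirror_mem [DecidableEq α]
    {K : Subgroup (Perm (Option α × ℤ × β))} {i : α}
    (hK : ∀ u, prodCongrRightHom (mirror i u) ∈ K) :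
    fixingSubgroup (Perm (Option α × ℤ × β)) (range fun b : β => ((none : Option α), (0 : ℤ), b))ᶜ
      ≤ K := by
  intro g hg
  rw [mem_fixingSubgroup_iff] at hg
  obtain ⟨v, rfl⟩ := exists_prodExtendRight_eq (a := none) (g := g) fun x hx =>
    hg x (by rintro ⟨b, rfl⟩; exact hx rfl)
  obtain ⟨u, rfl⟩ := exists_prodExtendRight_eq (a := (0 : ℤ)) (g := v) fun y hy => by
    simpa using hg (none, y) (by rintro ⟨b, hb⟩; exact hy (congrArg (·.2.1) hb).symm)
  obtain ⟨a, b, hab⟩ := exists_commutatorElement_eq_prodExtendRight_zero u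
  rw [← hab, prodExtendRight_eq_prodCongrRightHom, ← mirror_mul_mirror_mul_inv i, map_mul,
    map_mul, map_inv]
  exact mul_mem (mul_mem (hK a) (hK b)) (inv_mem (hK (b * a)))

end Fiberwise

end Equiv.Perm

theorem Subgroup.exists_forall_mem_of_commutatorElement_eq {M I H : Type*} [Group M]
    {G : I → Subgroup M} (hG : Directed (· ≤ ·) G) (hcover : ∀ g, ∃ i, g ∈ G i)
    (π : I → M) (h : (I → H) → M) (m : I → H → M) (hm : ∀ z i, ⁅π i, h z⁆ = m i (z i)) :
    ∃ i e, ∀ u, m i u ∈ G e := by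
  by_contra! hm'
  have he : ∀ i, ∃ e, G i ≤ G e ∧ π i ∈ G e := fun i =>
    let ⟨k, hk⟩ := hcover (π i)
    let ⟨e, hie, hke⟩ := hG i k
    ⟨e, hie, hke hk⟩
  choose e hie hπe using he
  choose z hz using fun i => hm' i (e i)
  obtain ⟨i, hi⟩ := hcover (h z)
  apply hz i
  rw [← hm, commutatorElement_def]
  have hhz := hie i hi
  exact mul_mem (mul_mem (mul_mem (hπe i) hhz) (inv_mem (hπe i))) (inv_mem hhz)

namespace Equiv.Perm

theorem exists_eq_top_of_fixingSubgroup_le {X : Type u} [Infinite X] {I : Type*}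
    {G : I → Subgroup (Perm X)} (hG : Directed (· ≤ ·) G) (hcover : ∀ g, ∃ i, g ∈ G i)
    {L : Set X} (hL : #L = #X) (hLc : #(Lᶜ : Set X) = #X) {e : I}
    (he : fixingSubgroup (Perm X) Lᶜ ≤ G e) : ∃ k, G k = ⊤ := by
  obtain ⟨c, hc⟩ := exists_fin_mk_preimage_singleton_eq X (n := 3) (by decide)
  have hconj : ∀ l : Fin 3, l ≠ 1 → ∃ i, fixingSubgroup (Perm X) (c ⁻¹' {l}) ≤ G i := by
    intro l hl
    obtain ⟨q, hq⟩ := exists_preimage_eq (P := Lᶜ) (Q := c ⁻¹' {l}) (hLc.trans (hc l).symm) <| by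
      rw [compl_compl, hL, mk_eq_of_subset_of_mk_eq (s := (c ⁻¹' {l})ᶜ) (t := c ⁻¹' {1})
        (fun x (hx : c x = 1) (hx' : c x = l) => hl (hx'.symm.trans hx)) (hc 1)]
    obtain ⟨i, hi⟩ := hcover q
    obtain ⟨k, hik, hek⟩ := hG i e
    exact ⟨k, fixingSubgroup_le_of_preimage_eq hq (he.trans hek) (hik hi)⟩
  obtain ⟨i₀, h₀⟩ := hconj 0 (by decide)
  obtain ⟨i₂, h₂⟩ := hconj 2 (by decide)
  obtain ⟨k, hk₀, hk₂⟩ := hG i₀ i₂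
  exact ⟨k, eq_top_of_fixingSubgroup_fiber_le hc (h₀.trans hk₀) (h₂.trans hk₂)⟩

theorem exists_eq_top_of_directed_of_mk_le {I Ω : Type u} [Infinite Ω] (hI : #I ≤ #Ω)
    {G : I → Subgroup (Perm (Option I × ℤ × Ω))} (hG : Directed (· ≤ ·) G)
    (hcover : ∀ g, ∃ i, g ∈ G i) : ∃ i, G i = ⊤ := by
  classical
  obtain ⟨i, e, he⟩ := Subgroup.exists_forall_mem_of_commutatorElement_eq hG hcover
    (fun i => prodCongr (swap none (some i)) (Equiv.refl (ℤ × Ω)))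
    (fun z => prodCongrRightHom fun o => o.elim 1 z) (fun i u => prodCongrRightHom (mirror i u))
    commutatorElement_swap_prodCongrRightHom_elim
  have hX := mk_option_prod_int_prod hI
  have hinj : ∀ n : ℤ, Function.Injective fun w : Ω => ((none : Option I), n, w) :=
    fun n => (Prod.mk_right_injective _).comp (Prod.mk_right_injective _)
  refine exists_eq_top_of_fixingSubgroup_le hG hcover ?_ ?_
    (fixingSubgroup_compl_range_le_of_prodCongrRightHom_mirror_mem he)
  · rw [mk_range_eq _ (hinj 0), hX]
  · refine mk_eq_of_subset_of_mk_eq (t := range fun w : Ω => ((none : Option I), (1 : ℤ), w)) ?_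
      (by rw [mk_range_eq _ (hinj 1), hX])
    rintro _ ⟨w, rfl⟩ ⟨w', hw'⟩
    simp at hw'

end Equiv.Perm

theorem stmt4 {Ω : Type u} [Infinite Ω] {I : Type u} (G : I → Subgroup (Equiv.Perm Ω))
    (hchain : ∀ i j, G i ≤ G j ∨ G j ≤ G i)
    (hcard : Cardinal.mk I ≤ Cardinal.mk Ω)
    (hcover : ∀ f : Equiv.Perm Ω, ∃ i, f ∈ G i) :
    ∃ i : I, G i = ⊤ := by
  obtain ⟨E⟩ := Cardinal.eq.mp (mk_option_prod_int_prod hcard)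
  let φ := E.permCongrHom.toMonoidHom
  obtain ⟨i, hi⟩ := Equiv.Perm.exists_eq_top_of_directed_of_mk_le hcard
    (G := fun i => (G i).comap φ)
    (fun i j => (hchain i j).elim (fun h => ⟨j, Subgroup.comap_mono h, le_rfl⟩)
      fun h => ⟨i, le_rfl, Subgroup.comap_mono h⟩)
    fun g => hcover (φ g)
  refine ⟨i, (Subgroup.eq_top_iff' _).mpr fun f => ?_⟩
  have hf : E.permCongrHom.symm f ∈ (G i).comap φ := hi ▸ Subgroup.mem_top _
  simpa only [Subgroup.mem_comap, φ, MulEquiv.coe_toMonoidHom, MulEquiv.apply_symm_apply] using hf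
end

section
/- If Ω is an infinite set and U generates Sym(Ω) as a group, then there exists a positive integer n such that every element of Sym(Ω) is a product of at most n elements of U ∪ U⁻¹. -/
/-!
Write `Ω ≃ (ℕ × ℤ) × Ω`, so that `Perm Ω` contains the product of the groups `Perm Ω` acting
on the blocks `{b} × Ω`. The word balls of `U` cover this countable product, so a diagonal
argument yields a radius `n` such that every family of permutations of the blocks of row `n` is
realized, up to what happens on the other rows, inside the ball of radius `n`. Commuting with the
shift of row `n` isolates an arbitrary permutation of the single block `(n, 0)`: the permutations
supported on one block form a bounded set. Conjugating, so do the permutations supported on any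
`M` with `#M = #Mᶜ = #Ω`; a further conjugation moves the support of any permutation with `#Ω`
fixed points into such a set; and every permutation is a product of two permutations with `#Ω`
fixed points.
-/

namespace CayleyBounded

open Equiv Set Function Cardinal Pointwise

variable {G : Type*} [Group G]

def wordBall (U : Set G) (n : ℕ) : Set G :=
  {g | ∃ l : List G, l.length ≤ n ∧ (∀ x ∈ l, x ∈ U ∪ U⁻¹) ∧ l.prod = g}

theorem wordBall_mono (U : Set G) {m n : ℕ} (h : m ≤ n) : wordBall U m ⊆ wordBall U n :=
  fun _ ⟨l, hl, hU, hprod⟩ => ⟨l, hl.trans h, hU, hprod⟩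

theorem wordBall_mul_subset (U : Set G) (m n : ℕ) :
    wordBall U m * wordBall U n ⊆ wordBall U (m + n) := by
  rintro _ ⟨_, ⟨l₁, hl₁, hU₁, rfl⟩, _, ⟨l₂, hl₂, hU₂, rfl⟩, rfl⟩
  refine ⟨l₁ ++ l₂, by simp only [List.length_append]; omega, ?_, List.prod_append⟩
  simpa only [List.mem_append, or_imp, forall_and] using ⟨hU₁, hU₂⟩

theorem inv_wordBall_subset (U : Set G) (n : ℕ) : (wordBall U n)⁻¹ ⊆ wordBall U n := by
  rintro g ⟨l, hl, hU, hprod⟩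
  refine ⟨(l.map (·⁻¹)).reverse, by simpa using hl, ?_, ?_⟩
  · simp only [List.mem_reverse, List.mem_map]
    rintro _ ⟨x, hx, rfl⟩
    rw [← Set.mem_inv, Set.union_inv, inv_inv, Set.union_comm]
    exact hU x hx
  · rw [← List.prod_inv_reverse, hprod, inv_inv]

theorem exists_mem_wordBall {U : Set G} (hU : Subgroup.closure U = ⊤) (g : G) :
    ∃ n, g ∈ wordBall U n := by
  have hg : g ∈ Submonoid.closure (U ∪ U⁻¹) := by
    rw [← Subgroup.closure_toSubmonoid, hU]; trivial
  obtain ⟨l, hl, rfl⟩ := Submonoid.exists_list_of_mem_closure hg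
  exact ⟨l.length, l, le_rfl, hl, rfl⟩

theorem map_mem_wordBall {H : Type*} [Group H] (φ : G →* H) {U : Set G} {n : ℕ} {g : G}
    (hg : g ∈ wordBall U n) : φ g ∈ wordBall (φ '' U) n := by
  obtain ⟨l, hl, hU, rfl⟩ := hg
  refine ⟨l.map φ, by simpa using hl, ?_, (map_list_prod φ l).symm⟩
  simp only [List.mem_map]
  rintro _ ⟨x, hx, rfl⟩
  rcases hU x hx with hx | hx
  · exact Or.inl (mem_image_of_mem φ hx)
  · exact Or.inr ⟨x⁻¹, hx, by simp⟩

def WordBounded (U S : Set G) : Prop := ∃ n, S ⊆ wordBall U n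

namespace WordBounded

variable {U S T : Set G}

theorem mono (hT : WordBounded U T) (hST : S ⊆ T) : WordBounded U S :=
  let ⟨n, hn⟩ := hT; ⟨n, hST.trans hn⟩

theorem wordBall (U : Set G) (n : ℕ) : WordBounded U (wordBall U n) := ⟨n, subset_rfl⟩

theorem singleton (hU : Subgroup.closure U = ⊤) (g : G) : WordBounded U {g} :=
  let ⟨n, hn⟩ := exists_mem_wordBall hU g; ⟨n, singleton_subset_iff.2 hn⟩

theorem mul (hS : WordBounded U S) (hT : WordBounded U T) : WordBounded U (S * T) :=
  let ⟨m, hm⟩ := hS; let ⟨n, hn⟩ := hT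
  ⟨m + n, (Set.mul_subset_mul hm hn).trans (wordBall_mul_subset U m n)⟩

theorem inv (hS : WordBounded U S) : WordBounded U S⁻¹ :=
  let ⟨n, hn⟩ := hS; ⟨n, (Set.inv_subset_inv.2 hn).trans (inv_wordBall_subset U n)⟩

theorem union (hS : WordBounded U S) (hT : WordBounded U T) : WordBounded U (S ∪ T) :=
  let ⟨m, hm⟩ := hS; let ⟨n, hn⟩ := hT
  ⟨max m n, union_subset (hm.trans (wordBall_mono U (le_max_left m n)))
    (hn.trans (wordBall_mono U (le_max_right m n)))⟩

end WordBounded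

theorem mem_inv_mul_mul_of_mul_mul_inv_mem {S T : Set G} {a g : G} (ha : a ∈ S)
    (hg : a * g * a⁻¹ ∈ T) : g ∈ S⁻¹ * T * S := by
  simpa [mul_assoc] using mul_mem_mul (mul_mem_mul (inv_mem_inv.2 ha) hg) ha

theorem exists_surjOn_eval_of_forall_exists_mem {H : Type*} {A : ℕ → Set (ℕ → H)}
    (hA : ∀ f, ∃ n, f ∈ A n) : ∃ n, SurjOn (eval n) (A n) univ := by
  by_contra! h
  choose h hh using fun n => not_subset.1 (h n)
  obtain ⟨n, hn⟩ := hA h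
  exact (hh n).2 ⟨h, hn, rfl⟩

theorem mulSingle_zero_eq_mulIndicator_mul_inv (w : G) (j : ℤ) :
    (Pi.mulSingle 0 w : ℤ → G) j =
      (Ici 0).mulIndicator (fun _ => w) j * ((Ici 0).mulIndicator (fun _ => w) (j - 1))⁻¹ := by
  rcases lt_trichotomy j 0 with hj | rfl | hj
  · rw [Pi.mulSingle_eq_of_ne hj.ne, mulIndicator_of_notMem (notMem_Ici.2 hj),
      mulIndicator_of_notMem (notMem_Ici.2 (by omega)), inv_one, mul_one]
  · simp
  · rw [Pi.mulSingle_eq_of_ne hj.ne', mulIndicator_of_mem (mem_Ici.2 hj.le),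
      mulIndicator_of_mem (mem_Ici.2 (by omega)), mul_inv_cancel]

section Blocks

variable {ι α : Type*}

def prodCongrRightHom : (ι → Perm α) →* Perm (ι × α) where
  toFun := prodCongrRight
  map_one' := rfl
  map_mul' _ _ := rfl

@[simp] theorem prodCongrRightHom_apply (u : ι → Perm α) (x : ι × α) :
    prodCongrRightHom u x = (x.1, u x.1 x.2) := rfl

@[simp] theorem prodCongrRightHom_symm_apply (u : ι → Perm α) (x : ι × α) :
    (prodCongrRightHom u).symm x = (x.1, (u x.1).symm x.2) := rfl

theorem prodCongr_mul_prodCongrRightHom_mul_inv (e : Perm ι) (u : ι → Perm α) :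
    prodCongr e (Equiv.refl α) * prodCongrRightHom u * (prodCongr e (Equiv.refl α))⁻¹ =
      prodCongrRightHom (u ∘ e.symm) := by
  ext x <;> simp [Perm.mul_apply, Perm.inv_def]

theorem exists_prodCongrRightHom_mulSingle_eq [DecidableEq ι] {b : ι} {F : Perm (ι × α)}
    (hF : (Prod.fst ⁻¹' {b})ᶜ ⊆ fixedPoints F) :
    ∃ w : Perm α, prodCongrRightHom (Pi.mulSingle b w) = F := by
  obtain ⟨π, hπ⟩ := (Perm.subtypeEquivSubtypePerm (fun x : ι × α => x.1 = b)).surjective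
    ⟨F, fun x hx => hF hx⟩
  let e : {x : ι × α // x.1 = b} ≃ α :=
    ⟨fun x => x.1.2, fun a => ⟨(b, a), rfl⟩, fun ⟨(_, _), h⟩ => by subst h; rfl, fun _ => rfl⟩
  have hπF : Perm.ofSubtype π = F := congrArg Subtype.val hπ
  refine ⟨e.permCongr π, hπF ▸ ?_⟩
  ext ⟨i, a⟩ : 1
  rcases eq_or_ne i b with rfl | hi
  · rw [Perm.ofSubtype_apply_of_mem π rfl]
    exact Prod.ext (π _).2.symm (by simp [e, permCongr_apply])
  · rw [Perm.ofSubtype_apply_of_not_mem π hi]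
    simp [hi]

end Blocks

theorem exists_wordBounded_range_prodCongrRightHom_mulSingle {α : Type*}
    {U : Set (Perm ((ℕ × ℤ) × α))} (hU : Subgroup.closure U = ⊤) :
    ∃ b : ℕ × ℤ, WordBounded U (range fun w : Perm α => prodCongrRightHom (Pi.mulSingle b w)) := by
  obtain ⟨n, hn⟩ := exists_surjOn_eval_of_forall_exists_mem
    (A := fun n => {f : ℕ → ℤ → Perm α | prodCongrRightHom (uncurry f) ∈ wordBall U n})
    fun f => exists_mem_wordBall hU _
  let shift : Perm (ℕ × ℤ) := prodCongrRightHom (Pi.mulSingle n (Equiv.addRight 1))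
  let σ : Perm ((ℕ × ℤ) × α) := prodCongr shift (Equiv.refl α)
  -- `σ` maps block `(n, j)` to `(n, j + 1)`; if `f n` is `w` on the blocks `j ≥ 0` and `1`
  -- elsewhere, the commutator of `prodCongrRightHom (uncurry f)` with `σ` is `w` on `(n, 0)` only.
  have hball := WordBounded.wordBall U n
  refine ⟨(n, 0), (hball.mul (((WordBounded.singleton hU σ).mul hball).mul
    (WordBounded.singleton hU σ⁻¹)).inv).mono ?_⟩
  rintro _ ⟨w, rfl⟩
  obtain ⟨f, hf, hfn⟩ := hn (mem_univ ((Ici 0).mulIndicator fun _ => w))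
  have hcomm : prodCongrRightHom (Pi.mulSingle (n, 0) w) = prodCongrRightHom (uncurry f) *
      (σ * prodCongrRightHom (uncurry f) * σ⁻¹)⁻¹ := by
    rw [prodCongr_mul_prodCongrRightHom_mul_inv, ← map_inv, ← map_mul]
    congr 1
    funext ⟨i, j⟩
    rcases eq_or_ne i n with rfl | hi
    · have hfi : f i = (Ici 0).mulIndicator fun _ => w := hfn
      have hshift : shift.symm (i, j) = (i, j - 1) := by simp [shift, sub_eq_add_neg]
      simp only [Pi.mul_apply, Pi.inv_apply, comp_apply, hshift, uncurry_apply_pair, hfi,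
        ← mulSingle_zero_eq_mulIndicator_mul_inv]
      rcases eq_or_ne j 0 with rfl | hj <;> simp [*]
    · have hshift : shift.symm (i, j) = (i, j) := by
        simp only [shift, prodCongrRightHom_symm_apply, Pi.mulSingle_eq_of_ne hi]; rfl
      simp [hshift, hi]
  simp only [hcomm]
  exact mul_mem_mul hf (inv_mem_inv.2 (mul_mem_mul (mul_mem_mul rfl hf) rfl))

section Cardinality

variable {X : Type*}

theorem mk_eq_of_subset {s t : Set X} (hst : s ⊆ t) (hs : #s = #X) : #t = #X :=
  le_antisymm (mk_set_le t) (hs ▸ mk_le_mk_of_subset hst)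

theorem mk_eq_or_mk_eq_of_subset_union [Infinite X] {s t u : Set X} (h : u ⊆ s ∪ t)
    (hu : #u = #X) : #s = #X ∨ #t = #X := by
  by_contra! hst
  have hlt := add_lt_of_lt (aleph0_le_mk X) ((mk_set_le s).lt_of_ne hst.1)
    ((mk_set_le t).lt_of_ne hst.2)
  exact ((mk_le_mk_of_subset h).trans (mk_union_le s t)).not_gt (hu ▸ hlt)

theorem exists_subset_mk_eq_mk_diff_eq [Infinite X] {B : Set X} (hB : #B = #X) :
    ∃ C ⊆ B, #C = #X ∧ #↑(B \ C) = #X := by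
  obtain ⟨e⟩ : Nonempty (B ≃ B ⊕ B) := by
    rw [← Cardinal.eq, ← Cardinal.add_def, add_eq_self (hB ▸ aleph0_le_mk X)]
  have hrange (s : Set (B ⊕ B)) (hs : #s = #B) : #(Subtype.val '' (e ⁻¹' s)) = #X := by
    rw [mk_image_eq Subtype.val_injective, mk_preimage_equiv, hs, hB]
  refine ⟨Subtype.val '' (e ⁻¹' range Sum.inl), Subtype.coe_image_subset _ _,
    hrange _ (by simp), mk_eq_of_subset ?_ (hrange (range Sum.inr) (by simp))⟩
  rintro _ ⟨b, hb, rfl⟩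
  refine ⟨b.2, ?_⟩
  rintro ⟨b', hb', hbb'⟩
  rw [Subtype.val_injective hbb'] at hb'
  rw [mem_preimage, ← compl_range_inl] at hb
  exact hb hb'

end Cardinality

section Perm

variable {X : Type*}

theorem exists_perm_mapsTo_mapsTo_compl {B C : Set X} (h : #B = #C) (hc : #↑Bᶜ = #↑Cᶜ) :
    ∃ τ : Perm X, MapsTo τ B C ∧ MapsTo τ Bᶜ Cᶜ := by
  classical
  obtain ⟨e₁⟩ := Cardinal.eq.1 h
  obtain ⟨e₂⟩ := Cardinal.eq.1 hc
  refine ⟨subtypeCongr e₁ e₂, fun x hx => ?_, fun x hx => ?_⟩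
  · simp [subtypeCongr, hx]
  · have hx' : x ∉ B := hx
    simp [subtypeCongr, hx']

theorem exists_conj_compl_subset_fixedPoints (g : Perm X) {M N : Set X} (hMN : Mᶜ ⊆ N)
    (hinter : #↑(M ∩ N) = #X) (hdiff : #↑(M \ N) = #X) (hg : #↑(M ∩ fixedPoints g) = #X) :
    ∃ G : Perm X, Mᶜ ⊆ fixedPoints G ∧ Nᶜ ⊆ fixedPoints (G * g * G⁻¹) := by
  classical
  set A := M \ fixedPoints g
  obtain ⟨A', hA'MN, hA'⟩ : ∃ A' ⊆ M ∩ N, #A' = #A :=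
    le_mk_iff_exists_subset.1 (hinter ▸ mk_set_le A)
  have hM : #M = #X := mk_eq_of_subset inter_subset_left hinter
  have hpre {S : Set X} (hS : S ⊆ M) : #((↑) ⁻¹' S : Set M) = #S :=
    mk_preimage_of_injective_of_subset_range _ _ Subtype.val_injective (by simpa using hS)
  have hAc : #↑((↑) ⁻¹' A : Set M)ᶜ = #M :=
    mk_eq_of_subset (s := (↑) ⁻¹' (M ∩ fixedPoints g)) (fun x hx hA => hA.2 hx.2)
      (by rw [hpre inter_subset_left, hg, hM])
  have hA'c : #↑((↑) ⁻¹' A' : Set M)ᶜ = #M :=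
    mk_eq_of_subset (s := (↑) ⁻¹' (M \ N)) (fun x hx hA' => hx.2 (hA'MN hA').2)
      (by rw [hpre sdiff_subset, hdiff, hM])
  obtain ⟨τ, hτ, -⟩ := exists_perm_mapsTo_mapsTo_compl (X := M) (B := (↑) ⁻¹' A)
    (C := (↑) ⁻¹' A') (by rw [hpre sdiff_subset, hpre (hA'MN.trans inter_subset_left), hA'])
    (hAc.trans hA'c.symm)
  refine ⟨Perm.ofSubtype τ, fun x hx => Perm.ofSubtype_apply_of_not_mem τ hx, fun y hy => ?_⟩
  obtain ⟨x, rfl⟩ := (Perm.ofSubtype τ).surjective y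
  suffices g x = x by simp [IsFixedPt, this]
  by_contra hgx
  replace hgx : x ∉ fixedPoints g := hgx
  by_cases hxM : x ∈ M
  · rw [Perm.ofSubtype_apply_of_mem τ hxM] at hy
    exact hy (hA'MN (hτ (show x ∈ A from ⟨hxM, hgx⟩))).2
  · rw [Perm.ofSubtype_apply_of_not_mem τ hxM] at hy
    exact hy (hMN hxM)

theorem exists_mk_eq_disjoint_image [Infinite X] (f : Perm X)
    (hf : #↑(fixedPoints f)ᶜ = #X) : ∃ B : Set X, #B = #X ∧ Disjoint B (f '' B) := by
  obtain ⟨B, hBdisj, hBmax⟩ := zorn_subset {B : Set X | Disjoint B (f '' B)} fun c hc hchain => by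
    refine ⟨⋃₀ c, disjoint_left.2 ?_, fun s hs => subset_sUnion_of_mem hs⟩
    rintro x ⟨s, hs, hxs⟩ ⟨y, ⟨t, ht, hyt⟩, rfl⟩
    rcases hchain.total hs ht with hst | hts
    · exact disjoint_left.1 (hc ht) (hst hxs) (mem_image_of_mem f hyt)
    · exact disjoint_left.1 (hc hs) hxs (mem_image_of_mem f (hts hyt))
  have hcover : (fixedPoints f)ᶜ ⊆ B ∪ f '' B ∪ f ⁻¹' B := by
    intro x hx
    by_contra hxB
    simp only [mem_union, not_or] at hxB
    have hins : Disjoint (insert x B) (f '' insert x B) := by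
      rw [image_insert_eq, disjoint_insert_left, disjoint_insert_right]
      exact ⟨by simpa [Ne.symm hx] using hxB.1.2, hxB.2, hBdisj⟩
    exact hxB.1.1 (hBmax hins (subset_insert x B) (mem_insert x B))
  refine ⟨B, ?_, hBdisj⟩
  rcases mk_eq_or_mk_eq_of_subset_union hcover hf with h | h
  · rcases mk_eq_or_mk_eq_of_subset_union subset_rfl h with h | h
    · exact h
    · rwa [mk_image_eq f.injective] at h
  · rwa [mk_preimage_equiv] at h

theorem exists_perm_eqOn_of_disjoint_image (f : Perm X) {B : Set X} (hB : Disjoint B (f '' B)) :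
    ∃ g : Perm X, EqOn g f B ∧ (B ∪ f '' B)ᶜ ⊆ fixedPoints g := by
  classical
  have hfB : ∀ x ∈ B, f x ∉ B := fun x hx => disjoint_right.1 hB (mem_image_of_mem f hx)
  let g₀ (x : X) : X := if x ∈ B then f x else if f.symm x ∈ B then f.symm x else x
  have hg₀ : Involutive g₀ := by
    intro x
    by_cases hx : x ∈ B
    · simp [g₀, hx, hfB x hx]
    by_cases hx' : f.symm x ∈ B
    · simp [g₀, hx, hx']
    · simp [g₀, hx, hx']
  refine ⟨hg₀.toPerm, fun x hx => if_pos hx, fun x hx => ?_⟩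
  simp only [mem_compl_iff, mem_union, not_or, image_eq_preimage_symm, mem_preimage] at hx
  simp [IsFixedPt, g₀, hx.1, hx.2]

theorem exists_mul_eq_mk_fixedPoints [Infinite X] (f : Perm X) :
    ∃ g h : Perm X, #(fixedPoints g) = #X ∧ #(fixedPoints h) = #X ∧ g * h = f := by
  rcases mk_eq_or_mk_eq_of_subset_union (union_compl_self (fixedPoints f)).ge mk_univ
    with hfix | hmoved
  · exact ⟨f, 1, hfix, by simp [fixedPoints_id], mul_one f⟩
  obtain ⟨B, hB, hBf⟩ := exists_mk_eq_disjoint_image f hmoved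
  obtain ⟨C, hCB, hC, hBC⟩ := exists_subset_mk_eq_mk_diff_eq hB
  obtain ⟨g, hgf, hg⟩ := exists_perm_eqOn_of_disjoint_image f (hBf.mono hCB (image_mono hCB))
  refine ⟨g, g⁻¹ * f, mk_eq_of_subset ?_ hBC, mk_eq_of_subset ?_ hC, mul_inv_cancel_left g f⟩
  · rintro x ⟨hxB, hxC⟩
    refine hg fun hx => hx.elim hxC fun hxf => ?_
    exact disjoint_left.1 hBf hxB (image_mono hCB hxf)
  · intro x hx
    simp [IsFixedPt, ← hgf hx]

end Perm

section Supports

variable {X : Type*} {U : Set (Perm X)}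

theorem WordBounded.setOf_compl_subset_fixedPoints (hU : Subgroup.closure U = ⊤) {B : Set X}
    (hB : WordBounded U {F : Perm X | Bᶜ ⊆ fixedPoints F}) {M : Set X} (hBM : #B = #M)
    (hBMc : #↑Bᶜ = #↑Mᶜ) : WordBounded U {F : Perm X | Mᶜ ⊆ fixedPoints F} := by
  obtain ⟨τ, -, hτ⟩ := exists_perm_mapsTo_mapsTo_compl hBM hBMc
  refine (((WordBounded.singleton hU τ⁻¹).inv.mul hB).mul (WordBounded.singleton hU τ⁻¹)).mono
    fun F hF => mem_inv_mul_mul_of_mul_mul_inv_mem rfl fun x hx => ?_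
  have hFx : F (τ x) = τ x := hF (hτ hx)
  simp [IsFixedPt, hFx]

theorem WordBounded.setOf_mk_fixedPoints [Infinite X]
    (hS : ∀ M : Set X, #M = #X → #↑Mᶜ = #X → WordBounded U {F : Perm X | Mᶜ ⊆ fixedPoints F}) :
    WordBounded U {g : Perm X | #(fixedPoints g) = #X} := by
  obtain ⟨M, -, hM, hMc⟩ := exists_subset_mk_eq_mk_diff_eq (mk_univ (α := X))
  obtain ⟨Q, hQM, hQ, hMQ⟩ := exists_subset_mk_eq_mk_diff_eq hM
  set N := Mᶜ ∪ Q
  have hMN : Mᶜ ⊆ N := subset_union_left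
  have hNM : Nᶜ ⊆ M := fun x hx => by_contra fun hxM => hx (Or.inl hxM)
  have hinter : #↑(M ∩ N) = #X := mk_eq_of_subset (fun x hx => ⟨hQM hx, Or.inr hx⟩) hQ
  have hMdiff : #↑(M \ N) = #X :=
    mk_eq_of_subset (fun x hx => ⟨hx.1, fun h => h.elim (· hx.1) hx.2⟩) hMQ
  have hNdiff : #↑(N \ M) = #X := mk_eq_of_subset (fun x hx => ⟨Or.inl hx.2, hx.2⟩) hMc
  have hSM := hS M hM (mk_eq_of_subset (fun x hx => hx.2) hMc)
  have hSN := hS N (mk_eq_of_subset inter_subset_right hinter)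
    (mk_eq_of_subset (fun x hx => hx.2) hMdiff)
  refine (((hSM.inv.mul hSN).mul hSM).union ((hSN.inv.mul hSM).mul hSN)).mono fun g hg => ?_
  rcases mk_eq_or_mk_eq_of_subset_union (s := M ∩ fixedPoints g) (t := N ∩ fixedPoints g)
    (fun x hx => (em (x ∈ M)).imp (⟨·, hx⟩) fun hxM => ⟨hMN hxM, hx⟩) hg with h | h
  · obtain ⟨G, hG, hGg⟩ := exists_conj_compl_subset_fixedPoints g hMN hinter hMdiff h
    exact Or.inl (mem_inv_mul_mul_of_mul_mul_inv_mem hG hGg)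
  · obtain ⟨G, hG, hGg⟩ := exists_conj_compl_subset_fixedPoints g hNM
      (inter_comm M N ▸ hinter) hNdiff h
    exact Or.inr (mem_inv_mul_mul_of_mul_mul_inv_mem hG hGg)

end Supports

theorem mk_preimage_fst {ι α : Type*} [Countable ι] [Infinite α] {s : Set ι}
    (hs : s.Nonempty) : #(Prod.fst ⁻¹' s : Set (ι × α)) = #(ι × α) := by
  have hlift {t : Set ι} (ht : t.Nonempty) : #(Prod.fst ⁻¹' t : Set (ι × α)) = lift #α := by
    have : Nonempty t := ht.to_subtype
    rw [← prod_univ, mk_congr (Equiv.Set.prod t univ), mk_prod, mk_univ]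
    exact Cardinal.mul_eq_right (aleph0_le_lift.2 (aleph0_le_mk α))
      ((lift_le_aleph0.2 (mk_le_aleph0 (α := t))).trans (aleph0_le_lift.2 (aleph0_le_mk α)))
      (by simp)
  have : Nonempty ι := hs.to_subtype.map Subtype.val
  rw [hlift hs, ← hlift univ_nonempty, preimage_univ, mk_univ]

theorem WordBounded.univ_perm_prod {α : Type*} [Infinite α] {U : Set (Perm ((ℕ × ℤ) × α))}
    (hU : Subgroup.closure U = ⊤) : WordBounded U univ := by
  obtain ⟨b, hb⟩ := exists_wordBounded_range_prodCongrRightHom_mulSingle hU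
  have hB : WordBounded U {F | (Prod.fst ⁻¹' {b})ᶜ ⊆ fixedPoints F} :=
    hb.mono fun F hF => exists_prodCongrRightHom_mulSingle_eq hF
  have hfix := WordBounded.setOf_mk_fixedPoints fun M hM hMc =>
    hB.setOf_compl_subset_fixedPoints hU ((mk_preimage_fst (singleton_nonempty b)).trans hM.symm)
      (by rw [← preimage_compl, mk_preimage_fst ⟨(b.1 + 1, b.2), by simp [Prod.ext_iff]⟩, hMc])
  refine (hfix.mul hfix).mono fun f _ => ?_
  obtain ⟨g, h, hg, hh, rfl⟩ := exists_mul_eq_mk_fixedPoints f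
  exact mul_mem_mul hg hh

theorem WordBounded.univ_of_mulEquiv {G H : Type*} [Group G] [Group H] {U : Set G} (φ : G ≃* H)
    (h : WordBounded (φ '' U) univ) : WordBounded U univ := by
  obtain ⟨n, hn⟩ := h
  refine ⟨n, fun g _ => ?_⟩
  simpa [image_image] using map_mem_wordBall φ.symm.toMonoidHom (hn (mem_univ (φ g)))

end CayleyBounded

open CayleyBounded in
theorem stmt6 {Ω : Type*} [Infinite Ω] (U : Set (Equiv.Perm Ω))
    (hU : Subgroup.closure U = ⊤) :
    ∃ n : ℕ, 0 < n ∧ ∀ f : Equiv.Perm Ω, ∃ l : List (Equiv.Perm Ω),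
      l.length ≤ n ∧ (∀ x ∈ l, x ∈ U ∪ U⁻¹) ∧ l.prod = f := by
  obtain ⟨e⟩ : Nonempty (Ω ≃ (ℕ × ℤ) × Ω) := Cardinal.eq.1 (by simp)
  have hU' : Subgroup.closure (e.permCongrHom '' U) = ⊤ := by
    rw [← MonoidHom.coe_coe, ← MonoidHom.map_closure, hU, Subgroup.map_top_of_surjective _
      e.permCongrHom.surjective]
  obtain ⟨n, hn⟩ := (WordBounded.univ_perm_prod hU').univ_of_mulEquiv e.permCongrHom
  exact ⟨n + 1, n.succ_pos, fun f => wordBall_mono U n.le_succ (hn (Set.mem_univ f))⟩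
end
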